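/- arXiv:1609.02052 — 6 statements merged into one kernel-verified Lean document; each statement's English description precedes it below -/
import Mathlib

section
/- For every compact set C ⊆ ℝ^d, α^{−σ}(1 − W_α(x)²) converges to 2 Φ_β(x) as α → 0⁺, uniformly in x ∈ C (where Φ_β is extended by Φ_β(0) = 0). -/
open MeasureTheory Filter Complex Asymptotics
open scoped Topology

noncomputable section

/-- `ℝᵈ` realized as the Euclidean space. -/
abbrev Ed (d : ℕ) := EuclideanSpace ℝ (Fin d)

/-- For every compact set `C ⊆ ℝᵈ`, `α^{-σ}(1 - (W_α x)²)` converges to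
`2 Φ_β x` as `α → 0⁺`, uniformly in `x ∈ C` (with `Φ_β 0 = 0`), where
`W_α x = V (α^{γ/(γ+β)} x)`. -/
theorem stmt_2 (d : ℕ) (hd : 1 ≤ d)
    (V : Ed d → ℝ) (hV_meas : Measurable V) (Cv : ℝ) (hV_bdd : ∀ x, |V x| ≤ Cv)
    (hV0 : V 0 = 1) (hV_le : ∀ x, V x ≤ 1) (hV_max : ∀ x : Ed d, x ≠ 0 → V x < 1)
    (hV_decay : Tendsto V (cocompact (Ed d)) (𝓝 0))
    (β γ : ℝ) (hβ : 0 < β) (hγ : 0 < γ)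
    (Φ : Ed d → ℝ)
    (hΦ_smooth : ContDiffOn ℝ (⊤ : ℕ∞) Φ {x : Ed d | x ≠ 0})
    (hΦ_pos : ∀ x : Ed d, x ≠ 0 → 0 < Φ x) (hΦ0 : Φ 0 = 0)
    (hΦ_hom : ∀ t : ℝ, 0 < t → ∀ x : Ed d, Φ (t • x) = t ^ β * Φ x)
    (hV_asymp : (fun x : Ed d => V x - (1 - Φ x)) =o[𝓝 0] fun x : Ed d => ‖x‖ ^ β)
    (σ : ℝ) (hσ : σ = β * γ / (β + γ)) :
    ∀ C : Set (Ed d), IsCompact C →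
      TendstoUniformlyOn
        (fun (α : ℝ) (x : Ed d) => α ^ (-σ) * (1 - (V ((α ^ (γ / (γ + β)) : ℝ) • x)) ^ 2))
        (fun x : Ed d => 2 * Φ x) (𝓝[>] (0 : ℝ)) C := by
  intro C hC
  have hγβ : (0:ℝ) < γ + β := by linarith
  set s : ℝ := γ / (γ + β) with hs_def
  have hs_pos : 0 < s := div_pos hγ hγβ
  have hσ_pos : 0 < σ := by rw [hσ]; positivity
  have hσs : s * β = σ := by rw [hσ, hs_def]; field_simp; ring
  -- radius of C
  obtain ⟨R0, hR0⟩ := hC.exists_bound_of_continuousOn continuousOn_id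
  set R : ℝ := max R0 0 with hR_def
  have hxR : ∀ x ∈ C, ‖x‖ ≤ R := fun x hx => le_trans (hR0 x hx) (le_max_left _ _)
  have hR_nonneg : (0:ℝ) ≤ R := le_max_right _ _
  have hRβ_nonneg : (0:ℝ) ≤ R ^ β := Real.rpow_nonneg hR_nonneg β
  -- bound of Φ on the unit sphere
  have hsub : Metric.sphere (0 : Ed d) 1 ⊆ {x : Ed d | x ≠ 0} := by
    intro x hx
    rw [mem_sphere_zero_iff_norm] at hx
    simp only [Set.mem_setOf_eq]
    intro h; rw [h] at hx; simp at hx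
  obtain ⟨M1, hM1⟩ := (isCompact_sphere (0 : Ed d) 1).exists_bound_of_continuousOn
    (hΦ_smooth.continuousOn.mono hsub)
  set M1' : ℝ := max M1 0 with hM1'_def
  have hM1'_nonneg : (0:ℝ) ≤ M1' := le_max_right _ _
  have hΦ_nonneg : ∀ x : Ed d, 0 ≤ Φ x := by
    intro x
    rcases eq_or_ne x 0 with h | h
    · simp [h, hΦ0]
    · exact (hΦ_pos x h).le
  have hΦ_bound : ∀ x : Ed d, Φ x ≤ M1' * ‖x‖ ^ β := by
    intro x
    rcases eq_or_ne x 0 with h | h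
    · simp [h, hΦ0, Real.zero_rpow hβ.ne']
    · have hn : 0 < ‖x‖ := norm_pos_iff.mpr h
      set u : Ed d := ‖x‖⁻¹ • x with hu_def
      have hu : ‖u‖ = 1 := by
        rw [hu_def, norm_smul, norm_inv, norm_norm, inv_mul_cancel₀ hn.ne']
      have hx_eq : ‖x‖ • u = x := by
        rw [hu_def, smul_smul, mul_inv_cancel₀ hn.ne', one_smul]
      have h1 := hΦ_hom ‖x‖ hn u
      rw [hx_eq] at h1
      have h2 : Φ u ≤ M1' := le_trans (le_abs_self _)
        (le_trans (hM1 u (mem_sphere_zero_iff_norm.mpr hu)) (le_max_left _ _))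
      calc Φ x = ‖x‖ ^ β * Φ u := h1
        _ ≤ ‖x‖ ^ β * M1' := mul_le_mul_of_nonneg_left h2 (Real.rpow_nonneg hn.le β)
        _ = M1' * ‖x‖ ^ β := mul_comm _ _
  set M : ℝ := M1' * R ^ β with hM_def
  have hM_nonneg : 0 ≤ M := mul_nonneg hM1'_nonneg hRβ_nonneg
  have hΦ_le_M : ∀ x ∈ C, Φ x ≤ M := by
    intro x hx
    exact le_trans (hΦ_bound x) (mul_le_mul_of_nonneg_left
      (Real.rpow_le_rpow (norm_nonneg x) (hxR x hx) hβ.le) hM1'_nonneg)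
  rw [Metric.tendstoUniformlyOn_iff]
  intro ε hε
  set ε' : ℝ := ε / (4 * (R ^ β + 1)) with hε'_def
  have hden : (0:ℝ) < 4 * (R ^ β + 1) := by positivity
  have hε'_pos : 0 < ε' := div_pos hε hden
  have hfirst : 2 * (ε' * R ^ β) < ε / 2 := by
    have h1 : ε' * (R ^ β + 1) = ε / 4 := by
      rw [hε'_def]; field_simp
    nlinarith [hε'_pos]
  obtain ⟨δ, hδ_pos, hδ⟩ := Metric.eventually_nhds_iff.mp (hV_asymp.def hε'_pos)
  have hts : Tendsto (fun α : ℝ => α ^ s) (𝓝[>] (0:ℝ)) (𝓝 0) := by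
    have h := (Real.continuousAt_rpow_const 0 s (Or.inr hs_pos.le)).tendsto
    rw [Real.zero_rpow hs_pos.ne'] at h
    exact h.mono_left nhdsWithin_le_nhds
  have htσ : Tendsto (fun α : ℝ => α ^ σ) (𝓝[>] (0:ℝ)) (𝓝 0) := by
    have h := (Real.continuousAt_rpow_const 0 σ (Or.inr hσ_pos.le)).tendsto
    rw [Real.zero_rpow hσ_pos.ne'] at h
    exact h.mono_left nhdsWithin_le_nhds
  have E1 : ∀ᶠ α : ℝ in 𝓝[>] 0, 0 < α := self_mem_nhdsWithin
  have E2 : ∀ᶠ α : ℝ in 𝓝[>] 0, α ^ s * R < δ := by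
    have h := hts.mul_const R
    rw [zero_mul] at h
    exact h.eventually_lt_const hδ_pos
  have E3 : ∀ᶠ α : ℝ in 𝓝[>] 0, α ^ σ * (M + ε' * R ^ β) ^ 2 < ε / 2 := by
    have h := htσ.mul_const ((M + ε' * R ^ β) ^ 2)
    rw [zero_mul] at h
    exact h.eventually_lt_const (by linarith)
  filter_upwards [E1, E2, E3] with α hα hE2 hE3
  intro x hx
  have ht_pos : 0 < α ^ s := Real.rpow_pos_of_pos hα s
  set t : ℝ := α ^ s with ht_def
  set b : ℝ := α ^ σ with hb_def
  have hb_pos : 0 < b := Real.rpow_pos_of_pos hα σ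
  set a : ℝ := α ^ (-σ) with ha_def
  have ha_pos : 0 < a := Real.rpow_pos_of_pos hα _
  have hab : a * b = 1 := by
    rw [ha_def, hb_def, ← Real.rpow_add hα]
    simp
  have htβ : t ^ β = b := by
    rw [ht_def, hb_def, ← Real.rpow_mul hα.le, hσs]
  set y : Ed d := t • x with hy_def
  have hy_norm : ‖y‖ = t * ‖x‖ := by
    rw [hy_def, norm_smul, Real.norm_eq_abs, abs_of_pos ht_pos]
  have hy_lt : dist y 0 < δ := by
    rw [dist_zero_right, hy_norm]
    calc t * ‖x‖ ≤ t * R := mul_le_mul_of_nonneg_left (hxR x hx) ht_pos.le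
      _ < δ := hE2
  have hEy0 := hδ hy_lt
  set Ey : ℝ := V y - (1 - Φ y) with hEy_def
  have hyβ : ‖y‖ ^ β = b * ‖x‖ ^ β := by
    rw [hy_norm, Real.mul_rpow ht_pos.le (norm_nonneg x), htβ]
  have hxβ_le : ‖x‖ ^ β ≤ R ^ β := Real.rpow_le_rpow (norm_nonneg x) (hxR x hx) hβ.le
  have hEy_bound : |Ey| ≤ ε' * (b * ‖x‖ ^ β) := by
    have h : ‖Ey‖ ≤ ε' * ‖‖y‖ ^ β‖ := hEy0
    rwa [Real.norm_eq_abs, Real.norm_eq_abs,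
      _root_.abs_of_nonneg (Real.rpow_nonneg (norm_nonneg y) β), hyβ] at h
  have hΦy : Φ y = b * Φ x := by
    rw [hy_def, hΦ_hom t ht_pos x, htβ]
  set P : ℝ := Φ x with hP_def
  have hVy : V y = 1 - b * P + Ey := by rw [hEy_def, hΦy]; ring
  rw [Real.dist_eq]
  have key : 2 * P - a * (1 - V y ^ 2) = 2 * (a * Ey) + (P - a * Ey) * (b * P - Ey) := by
    rw [hVy]
    linear_combination (b * P ^ 2 - 2 * P - P * Ey) * hab
  have h1 : |a * Ey| ≤ ε' * R ^ β := by
    rw [abs_mul, abs_of_pos ha_pos]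
    calc a * |Ey| ≤ a * (ε' * (b * ‖x‖ ^ β)) := mul_le_mul_of_nonneg_left hEy_bound ha_pos.le
      _ = ε' * ‖x‖ ^ β * (a * b) := by ring
      _ = ε' * ‖x‖ ^ β := by rw [hab, mul_one]
      _ ≤ ε' * R ^ β := mul_le_mul_of_nonneg_left hxβ_le hε'_pos.le
  have h2 : |b * P - Ey| ≤ b * (M + ε' * R ^ β) := by
    have hPM : P ≤ M := hΦ_le_M x hx
    have hE2' : |Ey| ≤ ε' * (b * R ^ β) :=
      le_trans hEy_bound (mul_le_mul_of_nonneg_left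
        (mul_le_mul_of_nonneg_left hxβ_le hb_pos.le) hε'_pos.le)
    calc |b * P - Ey| ≤ |b * P| + |Ey| := abs_sub _ _
      _ = b * P + |Ey| := by rw [_root_.abs_of_nonneg (mul_nonneg hb_pos.le (hΦ_nonneg x))]
      _ ≤ b * M + ε' * (b * R ^ β) := add_le_add (mul_le_mul_of_nonneg_left hPM hb_pos.le) hE2'
      _ = b * (M + ε' * R ^ β) := by ring
  have h3 : |P - a * Ey| ≤ M + ε' * R ^ β := by
    calc |P - a * Ey| ≤ |P| + |a * Ey| := abs_sub _ _
      _ ≤ M + ε' * R ^ β := add_le_add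
          (by rw [_root_.abs_of_nonneg (hΦ_nonneg x)]; exact hΦ_le_M x hx) h1
  calc |2 * P - a * (1 - V y ^ 2)|
      = |2 * (a * Ey) + (P - a * Ey) * (b * P - Ey)| := by rw [key]
    _ ≤ |2 * (a * Ey)| + |(P - a * Ey) * (b * P - Ey)| := abs_add_le _ _
    _ = 2 * |a * Ey| + |P - a * Ey| * |b * P - Ey| := by
        rw [abs_mul 2 (a * Ey), abs_mul (P - a * Ey), _root_.abs_two]
    _ ≤ 2 * (ε' * R ^ β) + (M + ε' * R ^ β) * (b * (M + ε' * R ^ β)) := by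
        have hMε : (0:ℝ) ≤ M + ε' * R ^ β := by positivity
        exact add_le_add (by linarith)
          (mul_le_mul h3 h2 (abs_nonneg _) hMε)
    _ = 2 * (ε' * R ^ β) + b * (M + ε' * R ^ β) ^ 2 := by ring
    _ < ε / 2 + ε / 2 := add_lt_add hfirst hE3
    _ = ε := by ring
end
end

section
/- For every u ∈ D[T], one has K_α[u] → ∫ Ψ_γ(ξ) |û(ξ)|² dξ as α → 0⁺. -/
open MeasureTheory Filter Complex Asymptotics ComplexConjugate
open scoped Topology

noncomputable section

/-- The complex Hilbert space `L²(ℝᵈ)`. -/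
abbrev L2 (d : ℕ) := MeasureTheory.Lp ℂ 2 (volume : MeasureTheory.Measure (Ed d))

/-- `F` is the unitary Fourier transform on `L²(ℝᵈ)` in the convention
`(𝓕 u)(ξ) = (2π)^{-d/2} ∫ e^{-i ξ·x} u(x) dx`: it is a surjective linear isometry of
`L²(ℝᵈ)`, agreeing on integrable functions with the above integral. -/
def IsPaperFourier {d : ℕ} (F : L2 d ≃ₗᵢ[ℂ] L2 d) : Prop :=
  ∀ f : L2 d, MeasureTheory.Integrable (⇑f) volume →
    (⇑(F f) : Ed d → ℂ) =ᵐ[volume]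
      fun ξ : Ed d => (((2 * Real.pi) ^ (-(d : ℝ) / 2) : ℝ) : ℂ) *
        ∫ x : Ed d, Complex.exp (-Complex.I * ((inner ℝ x ξ : ℝ) : ℂ)) * (⇑f) x

/-- The scalar product `(u, v) = ∫ u(x) conj (v(x)) dx` on `L²(ℝᵈ)` (the convention of the
paper: linear in the first argument). -/
def sesq {d : ℕ} (u v : L2 d) : ℂ := ∫ x : Ed d, (⇑u) x * conj ((⇑v) x)

/-- The `n`-th eigenvalue (in descending order, counting multiplicity) of a compact
self-adjoint operator `B` on `L²(ℝᵈ)`, via its max-min characterization: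
`λ⁽ⁿ⁾ = sup over n-dimensional subspaces M of inf_{u ∈ M, ‖u‖ = 1} ⟨B u, u⟩`. -/
def lamEig {d : ℕ} (B : L2 d → L2 d) (n : ℕ) : ℝ :=
  ⨆ M : {M : Submodule ℂ (L2 d) // Module.finrank ℂ M = n},
    ⨅ u : {u : L2 d // u ∈ M.1 ∧ ‖u‖ = 1}, (sesq (B u.1) u.1).re

/-- The form domain `D[T] = {u ∈ L² : ∫ |ξ|^γ |û|² < ∞, ∫ |x|^β |u|² < ∞}`. -/
def DTset {d : ℕ} (F : L2 d ≃ₗᵢ[ℂ] L2 d) (γ β : ℝ) : Set (L2 d) :=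
  {u : L2 d |
    MeasureTheory.Integrable (fun ξ : Ed d => ‖ξ‖ ^ γ * ‖(⇑(F u)) ξ‖ ^ 2) volume ∧
    MeasureTheory.Integrable (fun x : Ed d => ‖x‖ ^ β * ‖(⇑u) x‖ ^ 2) volume}

/-- The `n`-th min-max value of a quadratic form `Tf` with form domain `DT`:
`μ⁽ⁿ⁾ = inf over n-dimensional subspaces M ⊆ DT of sup_{u ∈ M, ‖u‖ = 1} Tf u`. -/
def muVal {d : ℕ} (DT : Set (L2 d)) (Tf : L2 d → ℝ) (n : ℕ) : ℝ :=
  ⨅ M : {M : Submodule ℂ (L2 d) // Module.finrank ℂ M = n ∧ (M : Set (L2 d)) ⊆ DT},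
    ⨆ u : {u : L2 d // u ∈ M.1 ∧ ‖u‖ = 1}, Tf u.1

/-- For every `u ∈ D[T]`, `K_α[u] → ∫ Ψ_γ(ξ) |û(ξ)|² dξ` as `α → 0⁺`. -/
theorem stmt_6 (d : ℕ) (hd : 1 ≤ d)
    (a : Ed d → ℝ) (ha_meas : Measurable a) (Ca : ℝ) (ha_bdd : ∀ ξ, |a ξ| ≤ Ca)
    (ha0 : a 0 = 1) (ha_le : ∀ ξ, a ξ ≤ 1) (ha_lt : ∀ ξ : Ed d, ξ ≠ 0 → a ξ < 1)
    (γ β : ℝ) (hγ : 0 < γ) (hβ : 0 < β)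
    (Ψ : Ed d → ℝ)
    (hΨ_smooth : ContDiffOn ℝ (⊤ : ℕ∞) Ψ {ξ : Ed d | ξ ≠ 0})
    (hΨ_pos : ∀ ξ : Ed d, ξ ≠ 0 → 0 < Ψ ξ)
    (hΨ_hom : ∀ t : ℝ, 0 < t → ∀ ξ : Ed d, Ψ (t • ξ) = t ^ γ * Ψ ξ)
    (ha_asymp : (fun ξ : Ed d => a ξ - (1 - Ψ ξ)) =o[𝓝 0] fun ξ : Ed d => ‖ξ‖ ^ γ)
    (C0 : ℝ) (ha_pt : ∀ ξ : Ed d, 1 - a ξ ≤ C0 * ‖ξ‖ ^ γ)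
    (σ : ℝ) (hσ : σ = β * γ / (β + γ))
    (F : L2 d ≃ₗᵢ[ℂ] L2 d) (hF : IsPaperFourier F)
    (u : L2 d) (hu : u ∈ DTset F γ β) :
    Tendsto
      (fun α : ℝ => α ^ (-σ) * ∫ ξ : Ed d,
        (1 - a ((α ^ (β / (γ + β)) : ℝ) • ξ)) * ‖(⇑(F u)) ξ‖ ^ 2)
      (𝓝[>] (0 : ℝ)) (𝓝 (∫ ξ : Ed d, Ψ ξ * ‖(⇑(F u)) ξ‖ ^ 2)) := by
  -- Notation: `p` is the scaling exponent, `ε α = α ^ p`.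
  set p : ℝ := β / (γ + β) with hp_def
  have hγβ : (0:ℝ) < γ + β := by linarith
  have hp : 0 < p := div_pos hβ hγβ
  -- norm of scaled vector
  have hnorm_smul : ∀ (t : ℝ), 0 < t → ∀ ξ : Ed d, ‖t • ξ‖ ^ γ = t ^ γ * ‖ξ‖ ^ γ := by
    intro t ht ξ
    rw [norm_smul, Real.norm_eq_abs, abs_of_pos ht, Real.mul_rpow ht.le (norm_nonneg ξ)]
  -- exponent identity
  have hid : ∀ α : ℝ, 0 < α → (α ^ p) ^ (-γ) = α ^ (-σ) := by
    intro α hα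
    rw [← Real.rpow_mul hα.le]
    congr 1
    rw [hσ, hp_def]
    field_simp
    ring
  -- ε tends to 0 from the right
  have hε0 : Tendsto (fun α : ℝ => α ^ p) (𝓝[>] (0:ℝ)) (𝓝 0) := by
    have h := (Real.continuousAt_rpow_const 0 p (Or.inr hp.le)).tendsto
    rw [Real.zero_rpow hp.ne'] at h
    exact h.mono_left nhdsWithin_le_nhds
  haveI : Nonempty (Fin d) := ⟨⟨0, hd⟩⟩
  haveI : NullSingletonClass (volume : Measure (Ed d)) := inferInstance
  have hae0 : ∀ᵐ ξ : Ed d, ξ ≠ 0 := by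
    rw [MeasureTheory.ae_iff]
    have : {ξ : Ed d | ¬ ξ ≠ 0} = {0} := by ext ξ; simp
    rw [this]
    exact measure_singleton 0
  -- dominated convergence
  have key : Tendsto
      (fun α : ℝ => ∫ ξ : Ed d,
        (α ^ p) ^ (-γ) * ((1 - a ((α ^ p : ℝ) • ξ)) * ‖(⇑(F u)) ξ‖ ^ 2))
      (𝓝[>] (0:ℝ)) (𝓝 (∫ ξ : Ed d, Ψ ξ * ‖(⇑(F u)) ξ‖ ^ 2)) := by
    have hFu : AEStronglyMeasurable (fun ξ : Ed d => ‖(⇑(F u)) ξ‖ ^ 2) volume :=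
      ((Lp.aestronglyMeasurable (F u)).norm.aemeasurable.pow_const 2).aestronglyMeasurable
    apply MeasureTheory.tendsto_integral_filter_of_dominated_convergence
      (fun ξ : Ed d => C0 * (‖ξ‖ ^ γ * ‖(⇑(F u)) ξ‖ ^ 2))
    · -- measurability
      filter_upwards [self_mem_nhdsWithin] with α hα
      have hm : Measurable (fun ξ : Ed d => 1 - a ((α ^ p : ℝ) • ξ)) :=
        measurable_const.sub (ha_meas.comp (measurable_const_smul _))
      exact ((hm.aestronglyMeasurable.mul hFu).const_mul _)
    · -- uniform bound
      filter_upwards [self_mem_nhdsWithin] with α hα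
      refine Filter.Eventually.of_forall fun ξ => ?_
      have hα' : (0:ℝ) < α := hα
      have hεα : (0:ℝ) < α ^ p := Real.rpow_pos_of_pos hα' p
      have h1 : (0:ℝ) ≤ 1 - a ((α ^ p : ℝ) • ξ) := sub_nonneg.2 (ha_le _)
      have hsq : (0:ℝ) ≤ ‖(⇑(F u)) ξ‖ ^ 2 := by positivity
      have hnn : (0:ℝ) ≤ (α ^ p) ^ (-γ) := (Real.rpow_pos_of_pos hεα _).le
      rw [Real.norm_eq_abs, _root_.abs_of_nonneg (mul_nonneg hnn (mul_nonneg h1 hsq))]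
      have hb : 1 - a ((α ^ p : ℝ) • ξ) ≤ C0 * ((α ^ p) ^ γ * ‖ξ‖ ^ γ) := by
        have := ha_pt ((α ^ p : ℝ) • ξ)
        rwa [hnorm_smul _ hεα ξ] at this
      calc (α ^ p) ^ (-γ) * ((1 - a ((α ^ p : ℝ) • ξ)) * ‖(⇑(F u)) ξ‖ ^ 2)
          ≤ (α ^ p) ^ (-γ) * ((C0 * ((α ^ p) ^ γ * ‖ξ‖ ^ γ)) * ‖(⇑(F u)) ξ‖ ^ 2) :=
            mul_le_mul_of_nonneg_left (mul_le_mul_of_nonneg_right hb hsq) hnn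
        _ = C0 * (‖ξ‖ ^ γ * ‖(⇑(F u)) ξ‖ ^ 2) := by
            rw [Real.rpow_neg hεα.le]
            have hne : ((α ^ p : ℝ) ^ γ) ≠ 0 := (Real.rpow_pos_of_pos hεα γ).ne'
            field_simp
    · -- bound integrable
      exact hu.1.const_mul C0
    · -- a.e. pointwise convergence
      filter_upwards [hae0] with ξ hξ
      have hη : Tendsto (fun α : ℝ => (α ^ p : ℝ) • ξ) (𝓝[>] (0:ℝ)) (𝓝 0) := by
        simpa using hε0.smul_const ξ
      have hdiv : Tendsto
          (fun α : ℝ => (a ((α ^ p : ℝ) • ξ) - (1 - Ψ ((α ^ p : ℝ) • ξ))) / ‖(α ^ p : ℝ) • ξ‖ ^ γ)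
          (𝓝[>] (0:ℝ)) (𝓝 0) :=
        (ha_asymp.tendsto_div_nhds_zero).comp hη
      have hnξ : (0:ℝ) < ‖ξ‖ ^ γ := Real.rpow_pos_of_pos (norm_pos_iff.2 hξ) γ
      have herr : Tendsto
          (fun α : ℝ => (α ^ p) ^ (-γ) * (a ((α ^ p : ℝ) • ξ) - (1 - Ψ ((α ^ p : ℝ) • ξ))))
          (𝓝[>] (0:ℝ)) (𝓝 0) := by
        have h2 := hdiv.mul_const (‖ξ‖ ^ γ)
        rw [zero_mul] at h2
        refine Filter.Tendsto.congr' ?_ h2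
        filter_upwards [self_mem_nhdsWithin] with α hα
        have hα' : (0:ℝ) < α := hα
        have hεα : (0:ℝ) < α ^ p := Real.rpow_pos_of_pos hα' p
        rw [hnorm_smul _ hεα ξ, Real.rpow_neg hεα.le]
        have hne : ((α ^ p : ℝ) ^ γ) ≠ 0 := (Real.rpow_pos_of_pos hεα γ).ne'
        field_simp
      have h1 : Tendsto
          (fun α : ℝ => (Ψ ξ - (α ^ p) ^ (-γ) * (a ((α ^ p : ℝ) • ξ) - (1 - Ψ ((α ^ p : ℝ) • ξ))))
            * ‖(⇑(F u)) ξ‖ ^ 2)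
          (𝓝[>] (0:ℝ)) (𝓝 (Ψ ξ * ‖(⇑(F u)) ξ‖ ^ 2)) := by
        have h3 : Tendsto
            (fun α : ℝ => Ψ ξ - (α ^ p) ^ (-γ) * (a ((α ^ p : ℝ) • ξ) - (1 - Ψ ((α ^ p : ℝ) • ξ))))
            (𝓝[>] (0:ℝ)) (𝓝 (Ψ ξ - 0)) := tendsto_const_nhds.sub herr
        simpa using h3.mul_const (‖(⇑(F u)) ξ‖ ^ 2)
      refine Filter.Tendsto.congr' ?_ h1
      filter_upwards [self_mem_nhdsWithin] with α hα
      have hα' : (0:ℝ) < α := hα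
      have hεα : (0:ℝ) < α ^ p := Real.rpow_pos_of_pos hα' p
      have hΨε : Ψ ((α ^ p : ℝ) • ξ) = (α ^ p) ^ γ * Ψ ξ := hΨ_hom _ hεα ξ
      have hsplit : (1:ℝ) - a ((α ^ p : ℝ) • ξ)
          = (α ^ p) ^ γ * Ψ ξ - (a ((α ^ p : ℝ) • ξ) - (1 - Ψ ((α ^ p : ℝ) • ξ))) := by
        rw [← hΨε]; ring
      rw [hsplit, Real.rpow_neg hεα.le]
      have hne : ((α ^ p : ℝ) ^ γ) ≠ 0 := (Real.rpow_pos_of_pos hεα γ).ne'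
      field_simp
  refine Filter.Tendsto.congr' ?_ key
  filter_upwards [self_mem_nhdsWithin] with α hα
  have hα' : (0:ℝ) < α := hα
  rw [MeasureTheory.integral_const_mul, hid α hα']
end
end

section
/- For every u ∈ D[T], one has S_α[u] → 2 ∫ Φ_β(x) |u(x)|² dx as α → 0⁺. -/
open MeasureTheory Filter Complex Asymptotics ComplexConjugate
open scoped Topology

noncomputable section

/-- For every `u ∈ D[T]`, `S_α[u] → 2 ∫ Φ_β(x) |u(x)|² dx` as `α → 0⁺`. -/
theorem stmt_7 (d : ℕ) (hd : 1 ≤ d)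
    (V : Ed d → ℝ) (hV_meas : Measurable V) (Cv : ℝ) (hV_bdd : ∀ x, |V x| ≤ Cv)
    (hV0 : V 0 = 1) (hV_le : ∀ᵐ x : Ed d ∂(volume : Measure (Ed d)), V x ≤ 1)
    (hV_lt : ∀ x : Ed d, x ≠ 0 → V x < 1)
    (β γ : ℝ) (hβ : 0 < β) (hγ : 0 < γ)
    (Φ : Ed d → ℝ)
    (hΦ_smooth : ContDiffOn ℝ (⊤ : ℕ∞) Φ {x : Ed d | x ≠ 0})
    (hΦ_pos : ∀ x : Ed d, x ≠ 0 → 0 < Φ x)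
    (hΦ_hom : ∀ t : ℝ, 0 < t → ∀ x : Ed d, Φ (t • x) = t ^ β * Φ x)
    (hV_asymp : (fun x : Ed d => V x - (1 - Φ x)) =o[𝓝 0] fun x : Ed d => ‖x‖ ^ β)
    (C0 : ℝ)
    (hV_pt : ∀ᵐ x : Ed d ∂(volume : Measure (Ed d)), 1 - (V x) ^ 2 ≤ C0 * ‖x‖ ^ β)
    (σ : ℝ) (hσ : σ = β * γ / (β + γ))
    (F : L2 d ≃ₗᵢ[ℂ] L2 d) (hF : IsPaperFourier F)
    (u : L2 d) (hu : u ∈ DTset F γ β) :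
    Tendsto
      (fun α : ℝ => α ^ (-σ) * ∫ x : Ed d,
        (1 - (V ((α ^ (γ / (γ + β)) : ℝ) • x)) ^ 2) * ‖(⇑u) x‖ ^ 2)
      (𝓝[>] (0 : ℝ)) (𝓝 (2 * ∫ x : Ed d, Φ x * ‖(⇑u) x‖ ^ 2)) := by
  have hγβ : (0:ℝ) < γ + β := by linarith
  set p : ℝ := γ / (γ + β) with hp
  have hp_pos : 0 < p := div_pos hγ hγβ
  have hpβ : p * β = σ := by
    rw [hσ, hp]
    field_simp
    ring
  -- Step 1: the global bound |1 - V y ^ 2| ≤ C ‖y‖^β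
  obtain ⟨C, hC0, hC⟩ : ∃ C : ℝ, 0 ≤ C ∧ ∀ y : Ed d, |1 - V y ^ 2| ≤ C * ‖y‖ ^ β := by
    have hCv : (1:ℝ) ≤ Cv := by have := hV_bdd 0; rw [hV0] at this; simpa using this
    obtain ⟨M0, hM0⟩ := (isCompact_sphere (0 : Ed d) 1).exists_bound_of_continuousOn
      (hΦ_smooth.continuousOn.mono (by
        intro y hy
        simp only [Set.mem_setOf_eq]
        intro h
        rw [h] at hy
        simp at hy))
    set M : ℝ := max M0 0 with hM
    have hΦub : ∀ y : Ed d, y ≠ 0 → Φ y ≤ M * ‖y‖ ^ β := by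
      intro y hy
      have hny : 0 < ‖y‖ := norm_pos_iff.mpr hy
      have hyy : ‖y‖ • (‖y‖⁻¹ • y) = y := by
        rw [smul_smul, mul_inv_cancel₀ hny.ne', one_smul]
      have hmem : (‖y‖⁻¹ • y) ∈ Metric.sphere (0 : Ed d) 1 := by
        simp [norm_smul, abs_of_pos (inv_pos.mpr hny), inv_mul_cancel₀ hny.ne']
      have h1 : Φ y = ‖y‖ ^ β * Φ (‖y‖⁻¹ • y) := by
        rw [← hΦ_hom ‖y‖ hny (‖y‖⁻¹ • y), hyy]
      have h2 : Φ (‖y‖⁻¹ • y) ≤ M :=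
        le_trans (le_abs_self _) (le_trans (hM0 _ hmem) (le_max_left _ _))
      rw [h1, mul_comm]
      exact mul_le_mul_of_nonneg_right h2 (Real.rpow_nonneg hny.le β)
    have hlo := hV_asymp.def one_pos
    rw [Metric.eventually_nhds_iff] at hlo
    obtain ⟨r, hr, hball⟩ := hlo
    refine ⟨max ((M + 1) * (1 + Cv)) ((1 + Cv ^ 2) / r ^ β), ?_, ?_⟩
    · refine le_trans ?_ (le_max_left _ _)
      have : 0 ≤ M := le_max_right _ _
      nlinarith
    intro y
    have hyβ : 0 ≤ ‖y‖ ^ β := Real.rpow_nonneg (norm_nonneg y) β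
    by_cases hyr : ‖y‖ < r
    · by_cases hy0 : y = 0
      · subst hy0
        simp [hV0, Real.zero_rpow hβ.ne']
      · have he : |V y - (1 - Φ y)| ≤ ‖y‖ ^ β := by
          have := hball (y := y) (by simpa [dist_zero_right] using hyr)
          simpa [Real.norm_eq_abs, _root_.abs_of_nonneg hyβ] using this
        have h1V : |1 - V y| ≤ (M + 1) * ‖y‖ ^ β := by
          have hstep : |1 - V y| ≤ |V y - (1 - Φ y)| + Φ y := by
            have hΦabs : |(-Φ y)| = Φ y := by
              rw [abs_neg, abs_of_pos (hΦ_pos y hy0)]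
            calc |1 - V y| = |-(V y - (1 - Φ y) + -Φ y)| := by ring_nf
              _ = |V y - (1 - Φ y) + -Φ y| := abs_neg _
              _ ≤ |V y - (1 - Φ y)| + |(-Φ y)| := abs_add_le _ _
              _ = |V y - (1 - Φ y)| + Φ y := by rw [hΦabs]
          calc |1 - V y| ≤ |V y - (1 - Φ y)| + Φ y := hstep
            _ ≤ ‖y‖ ^ β + M * ‖y‖ ^ β := add_le_add he (hΦub y hy0)
            _ = (M + 1) * ‖y‖ ^ β := by ring
        have h2V : |1 + V y| ≤ 1 + Cv := by
          calc |1 + V y| ≤ |(1:ℝ)| + |V y| := abs_add_le _ _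
            _ ≤ 1 + Cv := by simpa using hV_bdd y
        have hmain : |1 - V y ^ 2| ≤ ((M + 1) * (1 + Cv)) * ‖y‖ ^ β := by
          have hfac : (1 - V y ^ 2) = (1 - V y) * (1 + V y) := by ring
          rw [hfac, abs_mul]
          calc |1 - V y| * |1 + V y| ≤ ((M + 1) * ‖y‖ ^ β) * (1 + Cv) := by
                apply mul_le_mul h1V h2V (abs_nonneg _)
                positivity
            _ = ((M + 1) * (1 + Cv)) * ‖y‖ ^ β := by ring
        exact le_trans hmain (mul_le_mul_of_nonneg_right (le_max_left _ _) hyβ)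
    · push_neg at hyr
      have hrβ : 0 < r ^ β := Real.rpow_pos_of_pos hr β
      have h1 : |1 - V y ^ 2| ≤ 1 + Cv ^ 2 := by
        have h2 : V y ^ 2 ≤ Cv ^ 2 := by
          have := hV_bdd y
          nlinarith [abs_nonneg (V y), _root_.sq_abs (V y), neg_abs_le (V y), le_abs_self (V y)]
        have h3 : 0 ≤ V y ^ 2 := sq_nonneg _
        rw [abs_le]; constructor <;> nlinarith
      have h4 : r ^ β ≤ ‖y‖ ^ β := Real.rpow_le_rpow hr.le hyr hβ.le
      have h5 : (1 + Cv ^ 2) ≤ ((1 + Cv ^ 2) / r ^ β) * ‖y‖ ^ β := by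
        rw [div_mul_eq_mul_div, le_div_iff₀ hrβ]
        have : 0 ≤ 1 + Cv ^ 2 := by positivity
        nlinarith
      exact le_trans h1 (le_trans h5 (mul_le_mul_of_nonneg_right (le_max_right _ _) hyβ))
  -- Step 2: the pointwise limit in the rescaling variable t
  have key : ∀ x : Ed d,
      Tendsto (fun t : ℝ => t ^ (-β) * (1 - V (t • x) ^ 2)) (𝓝[>] (0:ℝ)) (𝓝 (2 * Φ x)) := by
    intro x
    set l : Filter ℝ := 𝓝[>] (0:ℝ) with hl
    have hev : ∀ᶠ t : ℝ in l, t ∈ Set.Ioi (0:ℝ) := self_mem_nhdsWithin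
    have hsx : Tendsto (fun t : ℝ => t • x) l (𝓝 (0 : Ed d)) := by
      have hc : Continuous (fun t : ℝ => t • x) := continuous_id.smul continuous_const
      have := hc.tendsto 0
      rw [zero_smul] at this
      exact this.mono_left nhdsWithin_le_nhds
    have ho := hV_asymp.comp_tendsto hsx
    have ho2 : (fun t : ℝ => t ^ (-β) * (V (t • x) - (1 - Φ (t • x)))) =o[l]
        fun _ : ℝ => (1:ℝ) := by
      have h1 := (isBigO_refl (fun t : ℝ => t ^ (-β)) l).mul_isLittleO ho
      refine h1.trans_isBigO ?_
      have heq : (fun t : ℝ => t ^ (-β) * ((fun y : Ed d => ‖y‖ ^ β) ∘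
          (fun t : ℝ => t • x)) t) =ᶠ[l] fun _ => ‖x‖ ^ β := by
        filter_upwards [hev] with t ht
        simp only [Function.comp_apply]
        rw [norm_smul, Real.norm_eq_abs, abs_of_pos ht, Real.mul_rpow ht.le (norm_nonneg x),
          ← mul_assoc, ← Real.rpow_add ht, neg_add_cancel, Real.rpow_zero, one_mul]
      exact heq.trans_isBigO (isBigO_const_const _ one_ne_zero _)
    have h0 : Tendsto (fun t : ℝ => t ^ (-β) * (V (t • x) - (1 - Φ (t • x)))) l (𝓝 0) :=
      isLittleO_one_iff ℝ |>.mp ho2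
    have hA : Tendsto (fun t : ℝ => t ^ (-β) * (1 - V (t • x))) l (𝓝 (Φ x)) := by
      have h2 := (tendsto_const_nhds (x := Φ x) (f := l)).sub h0
      rw [sub_zero] at h2
      refine h2.congr' ?_
      filter_upwards [hev] with t ht
      have hΦt := hΦ_hom t ht x
      have h1 : t ^ (-β) * t ^ β = 1 := by
        rw [← Real.rpow_add ht, neg_add_cancel, Real.rpow_zero]
      rw [hΦt]
      linear_combination (-Φ x) * h1
    have htβ : Tendsto (fun t : ℝ => t ^ β) l (𝓝 0) := by
      have h3 := (Real.continuousAt_rpow_const 0 β (Or.inr hβ.le)).tendsto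
      rw [Real.zero_rpow hβ.ne'] at h3
      exact h3.mono_left nhdsWithin_le_nhds
    have hB : Tendsto (fun t : ℝ => V (t • x)) l (𝓝 1) := by
      have hprod := htβ.mul hA
      rw [zero_mul] at hprod
      have heq2 : (fun t : ℝ => t ^ β * (t ^ (-β) * (1 - V (t • x)))) =ᶠ[l]
          fun t => 1 - V (t • x) := by
        filter_upwards [hev] with t ht
        have h1 : t ^ β * t ^ (-β) = 1 := by
          rw [← Real.rpow_add ht, add_neg_cancel, Real.rpow_zero]
        linear_combination (1 - V (t • x)) * h1
      have h2 := hprod.congr' heq2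
      have h3 := (tendsto_const_nhds (x := (1:ℝ)) (f := l)).sub h2
      rw [sub_zero] at h3
      simpa using h3
    have heqf : (fun t : ℝ => t ^ (-β) * (1 - V (t • x) ^ 2)) =
        fun t => (t ^ (-β) * (1 - V (t • x))) * (1 + V (t • x)) := by
      funext t; ring
    rw [heqf, show (2:ℝ) * Φ x = Φ x * (1 + 1) by ring]
    exact hA.mul ((tendsto_const_nhds (x := (1:ℝ)) (f := l)).add hB)
  -- Step 3: the map α ↦ α^p tends to 0 within Ioi
  have ht : Tendsto (fun α : ℝ => α ^ p) (𝓝[>] (0:ℝ)) (𝓝[>] (0:ℝ)) := by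
    rw [tendsto_nhdsWithin_iff]
    constructor
    · have h3 := (Real.continuousAt_rpow_const 0 p (Or.inr hp_pos.le)).tendsto
      rw [Real.zero_rpow hp_pos.ne'] at h3
      exact h3.mono_left nhdsWithin_le_nhds
    · filter_upwards [self_mem_nhdsWithin] with α (hα : α ∈ Set.Ioi 0)
      exact Real.rpow_pos_of_pos hα p
  -- Step 4: dominated convergence
  have humeas := (Lp.aestronglyMeasurable u).norm
  have hn2 : AEStronglyMeasurable (fun x : Ed d => ‖(⇑u) x‖ ^ 2) volume := by
    exact (humeas.aemeasurable.pow_const 2).aestronglyMeasurable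
  have hDCT := MeasureTheory.tendsto_integral_filter_of_dominated_convergence
      (μ := (volume : Measure (Ed d))) (l := 𝓝[>] (0:ℝ))
      (F := fun α : ℝ => fun x : Ed d =>
        α ^ (-σ) * ((1 - V ((α ^ p) • x) ^ 2) * ‖(⇑u) x‖ ^ 2))
      (f := fun x : Ed d => 2 * (Φ x * ‖(⇑u) x‖ ^ 2))
      (bound := fun x : Ed d => C * (‖x‖ ^ β * ‖(⇑u) x‖ ^ 2))
      (by
        filter_upwards with α
        have hVm : Measurable fun x : Ed d => (1 - V ((α ^ p) • x) ^ 2) := by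
          have : Measurable fun x : Ed d => (α ^ p) • x := measurable_const_smul _
          exact (measurable_const.sub ((hV_meas.comp this).pow_const 2))
        exact ((hVm.aestronglyMeasurable.mul hn2).const_mul _)
      )
      (by
        filter_upwards [self_mem_nhdsWithin] with α (hα : α ∈ Set.Ioi 0)
        refine ae_of_all _ fun x => ?_
        have hα' : (0:ℝ) < α := hα
        have htp : (0:ℝ) < α ^ p := Real.rpow_pos_of_pos hα' p
        have hασ : (0:ℝ) < α ^ (-σ) := Real.rpow_pos_of_pos hα' _
        have hAB : α ^ (-σ) * α ^ σ = 1 := by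
          rw [← Real.rpow_add hα', neg_add_cancel, Real.rpow_zero]
        have hbound := hC ((α ^ p) • x)
        have hns : ‖(α ^ p) • x‖ ^ β = α ^ σ * ‖x‖ ^ β := by
          rw [norm_smul, Real.norm_eq_abs, _root_.abs_of_pos htp,
            Real.mul_rpow htp.le (norm_nonneg x), ← Real.rpow_mul hα'.le, hpβ]
        have hnn : (0:ℝ) ≤ ‖(⇑u) x‖ ^ 2 := by positivity
        calc ‖α ^ (-σ) * ((1 - V ((α ^ p) • x) ^ 2) * ‖(⇑u) x‖ ^ 2)‖
            = α ^ (-σ) * (|1 - V ((α ^ p) • x) ^ 2| * ‖(⇑u) x‖ ^ 2) := by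
              rw [Real.norm_eq_abs, abs_mul, abs_mul, _root_.abs_of_pos hασ,
                _root_.abs_of_nonneg hnn]
          _ ≤ α ^ (-σ) * ((C * ‖(α ^ p) • x‖ ^ β) * ‖(⇑u) x‖ ^ 2) := by
              gcongr

          _ = C * (‖x‖ ^ β * ‖(⇑u) x‖ ^ 2) := by
              rw [hns]
              linear_combination (C * (‖x‖ ^ β * ‖(⇑u) x‖ ^ 2)) * hAB
      )
      ((hu.2.const_mul C))
      (ae_of_all _ fun x => by
        show Tendsto (fun α : ℝ => α ^ (-σ) * ((1 - V ((α ^ p) • x) ^ 2) * ‖(⇑u) x‖ ^ 2))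
          (𝓝[>] (0:ℝ)) (𝓝 (2 * (Φ x * ‖(⇑u) x‖ ^ 2)))
        have hk := (key x).comp ht
        have hfin := hk.mul_const (‖(⇑u) x‖ ^ 2)
        rw [show (2:ℝ) * (Φ x * ‖(⇑u) x‖ ^ 2) = (2 * Φ x) * ‖(⇑u) x‖ ^ 2 by ring]
        refine hfin.congr' ?_
        filter_upwards [self_mem_nhdsWithin] with α (hα : α ∈ Set.Ioi 0)
        have hα' : (0:ℝ) < α := hα
        have hrw : (α ^ p) ^ (-β) = α ^ (-σ) := by
          rw [← Real.rpow_mul hα'.le]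
          congr 1
          rw [← hpβ]; ring
        simp only [Function.comp_apply]
        rw [hrw]; ring)
  -- Step 5: conclude
  have heqfun : ∀ α : ℝ, (∫ x : Ed d,
        α ^ (-σ) * ((1 - V ((α ^ p) • x) ^ 2) * ‖(⇑u) x‖ ^ 2)) =
      α ^ (-σ) * ∫ x : Ed d, (1 - V ((α ^ p) • x) ^ 2) * ‖(⇑u) x‖ ^ 2 :=
    fun α => integral_const_mul _ _
  have hlim : (∫ x : Ed d, 2 * (Φ x * ‖(⇑u) x‖ ^ 2)) =
      2 * ∫ x : Ed d, Φ x * ‖(⇑u) x‖ ^ 2 := integral_const_mul _ _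
  rw [← hlim]
  exact hDCT.congr heqfun
end
end

section
/- For every u ∈ D[T], setting w_α := W_α u, one has K_α[w_α − u] → 0 as α → 0⁺. -/
open MeasureTheory Filter Complex Asymptotics ComplexConjugate
open scoped Topology

noncomputable section

lemma l2_norm_sq_eq_integral {d : ℕ} (f : L2 d) :
    ‖f‖ ^ 2 = ∫ x : Ed d, ‖(⇑f) x‖ ^ 2 := by
  rw [← @inner_self_eq_norm_sq ℂ _ _ _ _ f, MeasureTheory.L2.inner_def,
    ← integral_re (MeasureTheory.L2.integrable_inner f f)]
  exact (integral_congr_ae (Eventually.of_forall fun x => (inner_self_eq_norm_sq _).symm)).symm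

lemma l2_int_norm_sq {d : ℕ} (f : L2 d) :
    Integrable (fun x : Ed d => ‖(⇑f) x‖ ^ 2) volume := by
  have := (MeasureTheory.Lp.memLp f).integrable_norm_rpow (by norm_num) (by norm_num)
  simpa [ENNReal.toReal_ofNat, Real.rpow_natCast] using this

theorem stmt_8' (d : ℕ) (hd : 1 ≤ d)
    (a V : Ed d → ℝ) (ha_meas : Measurable a) (hV_meas : Measurable V)
    (Ca : ℝ) (ha_rng : ∀ ξ : Ed d, 0 ≤ 1 - a ξ ∧ 1 - a ξ ≤ Ca)
    (Cv : ℝ) (hV_bdd : ∀ x, |V x| ≤ Cv)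
    (β γ : ℝ) (hβ : 0 < β) (hγ : 0 < γ)
    (C1 : ℝ) (hV_pt : ∀ x : Ed d, |V x - 1| ≤ C1 * ‖x‖ ^ β)
    (σ : ℝ) (hσ : σ = β * γ / (β + γ))
    (F : L2 d ≃ₗᵢ[ℂ] L2 d)
    (MW : ℝ → L2 d →L[ℂ] L2 d)
    (hMW : ∀ α : ℝ, 0 < α → ∀ u : L2 d,
      (⇑(MW α u) : Ed d → ℂ) =ᵐ[volume]
        fun x => (V ((α ^ (γ / (γ + β)) : ℝ) • x) : ℂ) * (⇑u) x)
    (u : L2 d)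
    (hu2 : MeasureTheory.Integrable (fun x : Ed d => ‖x‖ ^ β * ‖(⇑u) x‖ ^ 2) volume) :
    Tendsto
      (fun α : ℝ => α ^ (-σ) * ∫ ξ : Ed d,
        (1 - a ((α ^ (β / (γ + β)) : ℝ) • ξ)) * ‖(⇑(F (MW α u - u))) ξ‖ ^ 2)
      (𝓝[>] (0 : ℝ)) (𝓝 0) := by
  have hCv : (0:ℝ) ≤ Cv := (abs_nonneg _).trans (hV_bdd 0)
  have hCa : (0:ℝ) ≤ Ca := (ha_rng 0).1.trans (ha_rng 0).2
  have hσpos : 0 < σ := by rw [hσ]; positivity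
  have hγβ : (0:ℝ) < γ + β := by linarith
  have hεβ : ∀ α : ℝ, 0 < α → ((α ^ (γ / (γ + β)) : ℝ)) ^ β = α ^ σ := by
    intro α hα
    rw [← Real.rpow_mul hα.le, hσ]
    congr 1
    rw [add_comm β γ]
    field_simp
  have hεpos : ∀ α : ℝ, 0 < α → 0 < (α ^ (γ / (γ + β)) : ℝ) :=
    fun α hα => Real.rpow_pos_of_pos hα _
  have hVkey : ∀ α : ℝ, 0 < α → ∀ x : Ed d,
      |V ((α ^ (γ / (γ + β)) : ℝ) • x) - 1| ≤ C1 * (α ^ σ * ‖x‖ ^ β) := by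
    intro α hα x
    have h1 := hV_pt ((α ^ (γ / (γ + β)) : ℝ) • x)
    rwa [norm_smul, Real.norm_eq_abs, abs_of_pos (hεpos α hα),
      Real.mul_rpow (hεpos α hα).le (norm_nonneg x), hεβ α hα] at h1
  have cancel : ∀ α : ℝ, 0 < α → α ^ (-σ) * α ^ σ = 1 := by
    intro α hα
    rw [← Real.rpow_add hα]
    simp
  -- nonnegativity of g
  have hg0 : ∀ α : ℝ, 0 < α → ∀ x : Ed d,
      0 ≤ α ^ (-σ) * ((V ((α ^ (γ / (γ + β)) : ℝ) • x) - 1) ^ 2 * ‖(⇑u) x‖ ^ 2) :=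
    fun α hα x => mul_nonneg (Real.rpow_nonneg hα.le _)
      (mul_nonneg (sq_nonneg _) (pow_nonneg (norm_nonneg _) 2))
  -- uniform bound
  have hgb1 : ∀ α : ℝ, 0 < α → ∀ x : Ed d,
      α ^ (-σ) * ((V ((α ^ (γ / (γ + β)) : ℝ) • x) - 1) ^ 2 * ‖(⇑u) x‖ ^ 2)
        ≤ ((Cv + 1) * C1) * (‖x‖ ^ β * ‖(⇑u) x‖ ^ 2) := by
    intro α hα x
    have habs : |V ((α ^ (γ / (γ + β)) : ℝ) • x) - 1| ≤ Cv + 1 := by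
      have h2 := abs_le.mp (hV_bdd ((α ^ (γ / (γ + β)) : ℝ) • x))
      rw [abs_le]; constructor <;> linarith
    have hC1 : 0 ≤ C1 * (α ^ σ * ‖x‖ ^ β) :=
      (abs_nonneg _).trans (hVkey α hα x)
    have hb : (V ((α ^ (γ / (γ + β)) : ℝ) • x) - 1) ^ 2
        ≤ (Cv + 1) * (C1 * (α ^ σ * ‖x‖ ^ β)) := by
      rw [← _root_.sq_abs, sq]
      exact mul_le_mul habs (hVkey α hα x) (abs_nonneg _) (by linarith)
    calc α ^ (-σ) * ((V ((α ^ (γ / (γ + β)) : ℝ) • x) - 1) ^ 2 * ‖(⇑u) x‖ ^ 2)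
        ≤ α ^ (-σ) * ((Cv + 1) * (C1 * (α ^ σ * ‖x‖ ^ β)) * ‖(⇑u) x‖ ^ 2) :=
          mul_le_mul_of_nonneg_left
            (mul_le_mul_of_nonneg_right hb (pow_nonneg (norm_nonneg _) 2))
            (Real.rpow_nonneg hα.le _)
      _ = (α ^ (-σ) * α ^ σ) * ((Cv + 1) * C1 * (‖x‖ ^ β * ‖(⇑u) x‖ ^ 2)) := by ring
      _ = ((Cv + 1) * C1) * (‖x‖ ^ β * ‖(⇑u) x‖ ^ 2) := by rw [cancel α hα]; ring
  -- pointwise vanishing bound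
  have hgb2 : ∀ α : ℝ, 0 < α → ∀ x : Ed d,
      α ^ (-σ) * ((V ((α ^ (γ / (γ + β)) : ℝ) • x) - 1) ^ 2 * ‖(⇑u) x‖ ^ 2)
        ≤ (C1 ^ 2 * (‖x‖ ^ β) ^ 2 * ‖(⇑u) x‖ ^ 2) * α ^ σ := by
    intro α hα x
    have hb : (V ((α ^ (γ / (γ + β)) : ℝ) • x) - 1) ^ 2 ≤ (C1 * (α ^ σ * ‖x‖ ^ β)) ^ 2 := by
      rw [← _root_.sq_abs]
      exact pow_le_pow_left₀ (abs_nonneg _) (hVkey α hα x) 2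
    calc α ^ (-σ) * ((V ((α ^ (γ / (γ + β)) : ℝ) • x) - 1) ^ 2 * ‖(⇑u) x‖ ^ 2)
        ≤ α ^ (-σ) * ((C1 * (α ^ σ * ‖x‖ ^ β)) ^ 2 * ‖(⇑u) x‖ ^ 2) :=
          mul_le_mul_of_nonneg_left
            (mul_le_mul_of_nonneg_right hb (pow_nonneg (norm_nonneg _) 2))
            (Real.rpow_nonneg hα.le _)
      _ = (α ^ (-σ) * α ^ σ) * ((C1 ^ 2 * (‖x‖ ^ β) ^ 2 * ‖(⇑u) x‖ ^ 2) * α ^ σ) := by ring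
      _ = (C1 ^ 2 * (‖x‖ ^ β) ^ 2 * ‖(⇑u) x‖ ^ 2) * α ^ σ := by rw [cancel α hα]; ring
  have hmeas : ∀ α : ℝ, AEStronglyMeasurable
      (fun x : Ed d => α ^ (-σ) * ((V ((α ^ (γ / (γ + β)) : ℝ) • x) - 1) ^ 2 * ‖(⇑u) x‖ ^ 2))
      (volume : Measure (Ed d)) := by
    intro α
    have m1 : Measurable fun x : Ed d => (V ((α ^ (γ / (γ + β)) : ℝ) • x) - 1) ^ 2 :=
      ((hV_meas.comp (measurable_const_smul _)).sub measurable_const).pow_const 2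
    have m2 : AEStronglyMeasurable (fun x : Ed d => ‖(⇑u) x‖ ^ 2)
        (volume : Measure (Ed d)) := by
      exact (MeasureTheory.Lp.aestronglyMeasurable u).norm.pow 2
    exact (m1.aestronglyMeasurable.mul m2).const_mul _
  have hσ0 : Tendsto (fun α : ℝ => α ^ σ) (𝓝[>] (0:ℝ)) (𝓝 0) := by
    have h := (Real.continuousAt_rpow_const 0 σ (Or.inr hσpos.le)).tendsto
    rw [Real.zero_rpow hσpos.ne'] at h
    exact h.mono_left nhdsWithin_le_nhds
  have hdct : Tendsto
      (fun α : ℝ => ∫ x : Ed d,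
        α ^ (-σ) * ((V ((α ^ (γ / (γ + β)) : ℝ) • x) - 1) ^ 2 * ‖(⇑u) x‖ ^ 2))
      (𝓝[>] (0:ℝ)) (𝓝 0) := by
    have h0 : (𝓝 (0:ℝ)) = 𝓝 (∫ _x : Ed d, (0:ℝ)) := by simp
    rw [h0]
    refine tendsto_integral_filter_of_dominated_convergence
      (fun x : Ed d => ((Cv + 1) * C1) * (‖x‖ ^ β * ‖(⇑u) x‖ ^ 2)) ?_ ?_ ?_ ?_
    · exact Eventually.of_forall fun α => hmeas α
    · filter_upwards [self_mem_nhdsWithin] with α hα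
      refine Eventually.of_forall fun x => ?_
      rw [Real.norm_eq_abs, _root_.abs_of_nonneg (hg0 α hα x)]
      exact hgb1 α hα x
    · exact hu2.const_mul _
    · refine Eventually.of_forall fun x => ?_
      refine squeeze_zero' (g := fun α : ℝ => (C1 ^ 2 * (‖x‖ ^ β) ^ 2 * ‖(⇑u) x‖ ^ 2) * α ^ σ) ?_ ?_ ?_
      · filter_upwards [self_mem_nhdsWithin] with α hα using hg0 α hα x
      · filter_upwards [self_mem_nhdsWithin] with α hα using hgb2 α hα x
      · simpa using hσ0.const_mul (C1 ^ 2 * (‖x‖ ^ β) ^ 2 * ‖(⇑u) x‖ ^ 2)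
  refine tendsto_of_tendsto_of_tendsto_of_le_of_le' tendsto_const_nhds
    (by simpa using hdct.const_mul Ca) ?_ ?_
  · filter_upwards [self_mem_nhdsWithin] with α hα
    exact mul_nonneg (Real.rpow_nonneg (le_of_lt hα) _)
      (integral_nonneg fun ξ => mul_nonneg (ha_rng _).1 (pow_nonneg (norm_nonneg _) 2))
  · filter_upwards [self_mem_nhdsWithin] with α hα
    have hα' : (0:ℝ) < α := hα
    have hae : (⇑(MW α u - u) : Ed d → ℂ) =ᵐ[volume]
        fun x => (((V ((α ^ (γ / (γ + β)) : ℝ) • x) - 1 : ℝ)) : ℂ) * (⇑u) x := by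
      filter_upwards [MeasureTheory.Lp.coeFn_sub (MW α u) u, hMW α hα' u] with x h1 h2
      rw [h1, Pi.sub_apply, h2]
      push_cast
      ring
    have hnv : ‖MW α u - u‖ ^ 2
        = ∫ x : Ed d, (V ((α ^ (γ / (γ + β)) : ℝ) • x) - 1) ^ 2 * ‖(⇑u) x‖ ^ 2 := by
      rw [l2_norm_sq_eq_integral (MW α u - u)]
      refine integral_congr_ae ?_
      filter_upwards [hae] with x hx
      rw [hx, norm_mul, Complex.norm_real, mul_pow, Real.norm_eq_abs, _root_.sq_abs]
    have hIle : (∫ ξ : Ed d, (1 - a ((α ^ (β / (γ + β)) : ℝ) • ξ)) *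
          ‖(⇑(F (MW α u - u))) ξ‖ ^ 2) ≤ Ca * ‖MW α u - u‖ ^ 2 := by
      have hint : Integrable (fun ξ : Ed d => Ca * ‖(⇑(F (MW α u - u))) ξ‖ ^ 2) volume :=
        (l2_int_norm_sq (F (MW α u - u))).const_mul Ca
      calc (∫ ξ : Ed d, (1 - a ((α ^ (β / (γ + β)) : ℝ) • ξ)) * ‖(⇑(F (MW α u - u))) ξ‖ ^ 2)
          ≤ ∫ ξ : Ed d, Ca * ‖(⇑(F (MW α u - u))) ξ‖ ^ 2 :=
            integral_mono_of_nonneg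
              (Eventually.of_forall fun ξ =>
                mul_nonneg (ha_rng _).1 (pow_nonneg (norm_nonneg _) 2))
              hint
              (Eventually.of_forall fun ξ =>
                mul_le_mul_of_nonneg_right (ha_rng _).2 (pow_nonneg (norm_nonneg _) 2))
        _ = Ca * ∫ ξ : Ed d, ‖(⇑(F (MW α u - u))) ξ‖ ^ 2 := integral_const_mul _ _
        _ = Ca * ‖F (MW α u - u)‖ ^ 2 := by rw [l2_norm_sq_eq_integral]
        _ = Ca * ‖MW α u - u‖ ^ 2 := by rw [F.norm_map]
    calc α ^ (-σ) * (∫ ξ : Ed d, (1 - a ((α ^ (β / (γ + β)) : ℝ) • ξ)) *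
            ‖(⇑(F (MW α u - u))) ξ‖ ^ 2)
        ≤ α ^ (-σ) * (Ca * ‖MW α u - u‖ ^ 2) :=
          mul_le_mul_of_nonneg_left hIle (Real.rpow_nonneg hα'.le _)
      _ = Ca * (α ^ (-σ) *
            ∫ x : Ed d, (V ((α ^ (γ / (γ + β)) : ℝ) • x) - 1) ^ 2 * ‖(⇑u) x‖ ^ 2) := by
          rw [hnv]; ring
      _ = Ca * ∫ x : Ed d,
            α ^ (-σ) * ((V ((α ^ (γ / (γ + β)) : ℝ) • x) - 1) ^ 2 * ‖(⇑u) x‖ ^ 2) := by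
          rw [integral_const_mul]

/-- For every `u ∈ D[T]`, setting `w_α := W_α u`, one has
`K_α[w_α - u] → 0` as `α → 0⁺`. -/
theorem stmt_8 (d : ℕ) (hd : 1 ≤ d)
    (a V : Ed d → ℝ) (ha_meas : Measurable a) (hV_meas : Measurable V)
    (Ca : ℝ) (ha_rng : ∀ ξ : Ed d, 0 ≤ 1 - a ξ ∧ 1 - a ξ ≤ Ca)
    (Cv : ℝ) (hV_bdd : ∀ x, |V x| ≤ Cv)
    (hV_le : ∀ᵐ x : Ed d ∂(volume : Measure (Ed d)), V x ≤ 1)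
    (β γ : ℝ) (hβ : 0 < β) (hγ : 0 < γ)
    (Φ : Ed d → ℝ)
    (hΦ_smooth : ContDiffOn ℝ (⊤ : ℕ∞) Φ {x : Ed d | x ≠ 0})
    (hΦ_pos : ∀ x : Ed d, x ≠ 0 → 0 < Φ x)
    (hΦ_hom : ∀ t : ℝ, 0 < t → ∀ x : Ed d, Φ (t • x) = t ^ β * Φ x)
    (hV_asymp : (fun x : Ed d => V x - (1 - Φ x)) =o[𝓝 0] fun x : Ed d => ‖x‖ ^ β)
    (C1 : ℝ) (hV_pt : ∀ x : Ed d, |V x - 1| ≤ C1 * ‖x‖ ^ β)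
    (σ : ℝ) (hσ : σ = β * γ / (β + γ))
    (F : L2 d ≃ₗᵢ[ℂ] L2 d) (hF : IsPaperFourier F)
    (MW : ℝ → L2 d →L[ℂ] L2 d)
    (hMW : ∀ α : ℝ, 0 < α → ∀ u : L2 d,
      (⇑(MW α u) : Ed d → ℂ) =ᵐ[volume]
        fun x => (V ((α ^ (γ / (γ + β)) : ℝ) • x) : ℂ) * (⇑u) x)
    (u : L2 d) (hu : u ∈ DTset F γ β) :
    Tendsto
      (fun α : ℝ => α ^ (-σ) * ∫ ξ : Ed d,
        (1 - a ((α ^ (β / (γ + β)) : ℝ) • ξ)) * ‖(⇑(F (MW α u - u))) ξ‖ ^ 2)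
      (𝓝[>] (0 : ℝ)) (𝓝 0) := by
  exact stmt_8' d hd a V ha_meas hV_meas Ca ha_rng Cv hV_bdd β γ hβ hγ C1 hV_pt σ hσ F MW hMW u
    hu.2
end
end

section
/- For all u, v ∈ D[T], one has α^{−σ}(⟨u, v⟩ − ⟨B_α u, v⟩) → T[u, v] as α → 0⁺; equivalently, the remainder form R_α[u, v] := ⟨B_α u, v⟩ − ⟨u, v⟩ + α^σ T[u, v] satisfies α^{−σ} |R_α[u, v]| → 0 as α → 0⁺. -/
open MeasureTheory Filter Complex Asymptotics ComplexConjugate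
open scoped Topology

noncomputable section

namespace Stmt9Aux
variable {d : ℕ}

/-- A positively homogeneous function of positive degree vanishes at 0. -/
lemma homog_zero {Θ : Ed d → ℝ} {ρ : ℝ}
    (hhom : ∀ t : ℝ, 0 < t → ∀ x : Ed d, Θ (t • x) = t ^ ρ * Θ x) (hρ : 0 < ρ) :
    Θ 0 = 0 := by
  have h := hhom 2 (by norm_num) 0
  rw [smul_zero] at h
  have h2 : (1 : ℝ) < (2:ℝ) ^ ρ := by
    have := Real.one_lt_rpow_iff_of_pos (x := 2) (by norm_num) (y := ρ)
    simpa [this] using hρ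
  nlinarith

/-- Bound `Θ x ≤ C ‖x‖ ^ ρ` from homogeneity and continuity away from zero. -/
lemma homog_bound {Θ : Ed d → ℝ} {ρ : ℝ} (hρ : 0 < ρ)
    (hcont : ContinuousOn Θ {x : Ed d | x ≠ 0})
    (hhom : ∀ t : ℝ, 0 < t → ∀ x : Ed d, Θ (t • x) = t ^ ρ * Θ x) :
    ∃ C : ℝ, 0 ≤ C ∧ ∀ x : Ed d, Θ x ≤ C * ‖x‖ ^ ρ := by
  obtain ⟨C, hC⟩ := (isCompact_sphere (0 : Ed d) 1).exists_bound_of_continuousOn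
    (hcont.mono (fun x hx => by
      simp only [Metric.mem_sphere, dist_zero_right] at hx
      simp only [Set.mem_setOf_eq]
      intro h; rw [h] at hx; simp at hx))
  refine ⟨max C 0, le_max_right _ _, fun x => ?_⟩
  rcases eq_or_ne x 0 with rfl | hx
  · rw [homog_zero hhom hρ]
    simp [Real.zero_rpow (ne_of_gt hρ)]
  · have hxn : (0:ℝ) < ‖x‖ := norm_pos_iff.mpr hx
    have hmem : (‖x‖⁻¹ • x) ∈ Metric.sphere (0 : Ed d) 1 := by
      simp [norm_smul, abs_of_pos (inv_pos.mpr hxn), inv_mul_cancel₀ (ne_of_gt hxn)]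
    have h1 : Θ x = ‖x‖ ^ ρ * Θ (‖x‖⁻¹ • x) := by
      have := hhom ‖x‖ hxn (‖x‖⁻¹ • x)
      rw [smul_smul, mul_inv_cancel₀ (ne_of_gt hxn), one_smul] at this
      exact this
    have h2 : Θ (‖x‖⁻¹ • x) ≤ C := (le_abs_self _).trans <| by
      simpa [Real.norm_eq_abs] using hC _ hmem
    have hxr : (0:ℝ) ≤ ‖x‖ ^ ρ := Real.rpow_nonneg (norm_nonneg _) _
    calc Θ x = ‖x‖ ^ ρ * Θ (‖x‖⁻¹ • x) := h1
      _ ≤ ‖x‖ ^ ρ * max C 0 := by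
          exact mul_le_mul_of_nonneg_left (h2.trans (le_max_left _ _)) hxr
      _ = max C 0 * ‖x‖ ^ ρ := mul_comm _ _

/-- Uniform bound: `0 ≤ 1 - g x ≤ C ‖x‖ ^ ρ`. -/
lemma key_bound {g Θ : Ed d → ℝ} {ρ C0 : ℝ} (hρ : 0 < ρ)
    (hb : ∀ x, |g x| ≤ C0) (hle : ∀ x, g x ≤ 1)
    (hcont : ContinuousOn Θ {x : Ed d | x ≠ 0})
    (hhom : ∀ t : ℝ, 0 < t → ∀ x : Ed d, Θ (t • x) = t ^ ρ * Θ x)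
    (hasy : (fun x : Ed d => g x - (1 - Θ x)) =o[𝓝 0] fun x : Ed d => ‖x‖ ^ ρ) :
    ∃ C : ℝ, 0 < C ∧ ∀ x : Ed d, 1 - g x ≤ C * ‖x‖ ^ ρ := by
  obtain ⟨CΘ, hCΘ0, hCΘ⟩ := homog_bound hρ hcont hhom
  have h1 := (hasy.def (by norm_num : (0:ℝ) < 1))
  rw [Metric.eventually_nhds_iff] at h1
  obtain ⟨δ, hδ, hδ'⟩ := h1
  refine ⟨max (CΘ + 1) ((1 + C0) / (δ/2) ^ ρ) + 1, by positivity, fun x => ?_⟩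
  have hxr : (0:ℝ) ≤ ‖x‖ ^ ρ := Real.rpow_nonneg (norm_nonneg _) _
  rcases le_or_gt ‖x‖ (δ/2) with hxδ | hxδ
  · have hx' : dist x 0 < δ := by
      rw [dist_zero_right]; linarith
    have := hδ' hx'
    simp only [Real.norm_eq_abs, _root_.abs_of_nonneg hxr, one_mul] at this
    have habs : |g x - (1 - Θ x)| ≤ ‖x‖ ^ ρ := this
    have h2 : 1 - g x ≤ Θ x + ‖x‖ ^ ρ := by
      have := abs_le.mp habs
      linarith [this.1]
    have h3 : Θ x ≤ CΘ * ‖x‖ ^ ρ := hCΘ x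
    calc 1 - g x ≤ (CΘ + 1) * ‖x‖ ^ ρ := by nlinarith
      _ ≤ (max (CΘ + 1) ((1 + C0) / (δ/2) ^ ρ) + 1) * ‖x‖ ^ ρ := by
          apply mul_le_mul_of_nonneg_right _ hxr
          have := le_max_left (CΘ + 1) ((1 + C0) / (δ/2) ^ ρ)
          linarith
  · have hδ2 : (0:ℝ) < (δ/2) ^ ρ := Real.rpow_pos_of_pos (by linarith) _
    have hmon : (δ/2) ^ ρ ≤ ‖x‖ ^ ρ :=
      Real.rpow_le_rpow (by linarith) hxδ.le hρ.le
    have h4 : 1 - g x ≤ 1 + C0 := by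
      have := (abs_le.mp (hb x)).1; linarith
    calc 1 - g x ≤ 1 + C0 := h4
      _ = ((1 + C0) / (δ/2) ^ ρ) * (δ/2) ^ ρ := by field_simp
      _ ≤ ((1 + C0) / (δ/2) ^ ρ) * ‖x‖ ^ ρ := by
          apply mul_le_mul_of_nonneg_left hmon
          have h5 : (0:ℝ) ≤ 1 + C0 := by
            have := abs_nonneg (g 0); have := hb 0; linarith
          positivity
      _ ≤ (max (CΘ + 1) ((1 + C0) / (δ/2) ^ ρ) + 1) * ‖x‖ ^ ρ := by
          apply mul_le_mul_of_nonneg_right _ hxr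
          have := le_max_right (CΘ + 1) ((1 + C0) / (δ/2) ^ ρ)
          linarith


/-- `t ↦ t ^ e` maps `𝓝[>] 0` to `𝓝[>] 0` when `0 < e`. -/
lemma tendsto_rpow_nhdsGT {e : ℝ} (he : 0 < e) :
    Tendsto (fun α : ℝ => α ^ e) (𝓝[>] (0:ℝ)) (𝓝[>] (0:ℝ)) := by
  apply tendsto_nhdsWithin_of_tendsto_nhds_of_eventually_within
  · have h : ContinuousAt (fun p : ℝ × ℝ => p.1 ^ p.2) (0, e) :=
      Real.continuousAt_rpow (0, e) (Or.inr he)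
    have h2 : ContinuousAt (fun α : ℝ => α ^ e) 0 := by
      have hc : Continuous (fun α : ℝ => ((α, e) : ℝ × ℝ)) := by continuity
      exact ContinuousAt.comp (x := (0:ℝ)) h hc.continuousAt
    have := h2.tendsto
    rw [Real.zero_rpow (ne_of_gt he)] at this
    exact this.mono_left nhdsWithin_le_nhds
  · filter_upwards [self_mem_nhdsWithin] with α (hα : 0 < α)
    exact Real.rpow_pos_of_pos hα e

/-- Pointwise limit `(1 - g(t • x))/t^ρ → Θ x` as `t → 0⁺`. -/
lemma key_tendsto {g Θ : Ed d → ℝ} {ρ : ℝ} (hρ : 0 < ρ)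
    (hg0 : g 0 = 1)
    (hhom : ∀ t : ℝ, 0 < t → ∀ x : Ed d, Θ (t • x) = t ^ ρ * Θ x)
    (hasy : (fun x : Ed d => g x - (1 - Θ x)) =o[𝓝 0] fun x : Ed d => ‖x‖ ^ ρ)
    (x : Ed d) :
    Tendsto (fun t : ℝ => (1 - g (t • x)) / t ^ ρ) (𝓝[>] (0:ℝ)) (𝓝 (Θ x)) := by
  rcases eq_or_ne x 0 with rfl | hx
  · rw [homog_zero hhom hρ]
    apply Tendsto.congr' (f₁ := fun _ => (0:ℝ))
    · filter_upwards with t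
      simp [hg0]
    · exact tendsto_const_nhds
  · have hxn : (0:ℝ) < ‖x‖ := norm_pos_iff.mpr hx
    have hxρ : (0:ℝ) < ‖x‖ ^ ρ := Real.rpow_pos_of_pos hxn ρ
    have hsm : Tendsto (fun t : ℝ => t • x) (𝓝[>] (0:ℝ)) (𝓝 (0 : Ed d)) := by
      have h : Tendsto (fun t : ℝ => t • x) (𝓝 (0:ℝ)) (𝓝 ((0:ℝ) • x)) :=
        (continuous_id.smul continuous_const).tendsto 0
      rw [zero_smul] at h
      exact h.mono_left nhdsWithin_le_nhds
    have ho : (fun t : ℝ => g (t • x) - (1 - Θ (t • x))) =o[𝓝[>] (0:ℝ)]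
        fun t : ℝ => ‖t • x‖ ^ ρ := hasy.comp_tendsto hsm
    have ho2 : (fun t : ℝ => g (t • x) - (1 - Θ (t • x))) =o[𝓝[>] (0:ℝ)]
        fun t : ℝ => ‖x‖ ^ ρ * t ^ ρ := by
      refine ho.congr' (EventuallyEq.refl _ _) ?_
      filter_upwards [self_mem_nhdsWithin] with t (ht : 0 < t)
      rw [norm_smul, Real.norm_eq_abs, _root_.abs_of_pos ht,
        Real.mul_rpow ht.le (norm_nonneg x), mul_comm]
    have hdiv := ho2.tendsto_div_nhds_zero
    have hdiv2 : Tendsto (fun t : ℝ =>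
        ‖x‖ ^ ρ * ((g (t • x) - (1 - Θ (t • x))) / (‖x‖ ^ ρ * t ^ ρ)))
        (𝓝[>] (0:ℝ)) (𝓝 0) := by
      have := hdiv.const_mul (‖x‖ ^ ρ)
      simpa using this
    have hmain : Tendsto (fun t : ℝ =>
        Θ x - ‖x‖ ^ ρ * ((g (t • x) - (1 - Θ (t • x))) / (‖x‖ ^ ρ * t ^ ρ)))
        (𝓝[>] (0:ℝ)) (𝓝 (Θ x)) := by
      have := hdiv2.const_sub (Θ x)
      simpa using this
    refine hmain.congr' ?_
    filter_upwards [self_mem_nhdsWithin] with t (ht : 0 < t)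
    have htρ : (0:ℝ) < t ^ ρ := Real.rpow_pos_of_pos ht ρ
    rw [hhom t ht x]
    field_simp
    ring

/-- Main DCT convergence lemma. -/
lemma conv_main {g Θ : Ed d → ℝ} {ρ σ e C : ℝ} (hρ : 0 < ρ) (hσ : 0 < σ) (he : 0 < e)
    (heρ : e * ρ = σ) (hgmeas : Measurable g)
    (hgle : ∀ x, g x ≤ 1) (hC : 0 < C) (hCb : ∀ x : Ed d, 1 - g x ≤ C * ‖x‖ ^ ρ)
    (hlim : ∀ x : Ed d,
      Tendsto (fun t : ℝ => (1 - g (t • x)) / t ^ ρ) (𝓝[>] (0:ℝ)) (𝓝 (Θ x)))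
    {p q : Ed d → ℂ}
    (hp : AEStronglyMeasurable p (volume : Measure (Ed d)))
    (hq : AEStronglyMeasurable q (volume : Measure (Ed d)))
    (hip : Integrable (fun x : Ed d => ‖x‖ ^ ρ * ‖p x‖ ^ 2) volume)
    (hiq : Integrable (fun x : Ed d => ‖x‖ ^ ρ * ‖q x‖ ^ 2) volume) :
    Tendsto (fun α : ℝ =>
        ∫ x : Ed d, (((1 - g ((α ^ e) • x)) / α ^ σ : ℝ) : ℂ) * (p x * conj (q x)))
      (𝓝[>] (0:ℝ))
      (𝓝 (∫ x : Ed d, ((Θ x : ℝ) : ℂ) * (p x * conj (q x)))) := by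
  have hbd_int : Integrable
      (fun x : Ed d => C * (‖x‖ ^ ρ * ‖p x‖ ^ 2 + ‖x‖ ^ ρ * ‖q x‖ ^ 2)) volume :=
    (hip.add hiq).const_mul C
  apply tendsto_integral_filter_of_dominated_convergence
    (bound := fun x : Ed d => C * (‖x‖ ^ ρ * ‖p x‖ ^ 2 + ‖x‖ ^ ρ * ‖q x‖ ^ 2))
  · -- measurability
    filter_upwards [self_mem_nhdsWithin] with α (hα : 0 < α)
    have hm1 : Measurable (fun x : Ed d => (((1 - g ((α ^ e) • x)) / α ^ σ : ℝ) : ℂ)) := by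
      apply Complex.measurable_ofReal.comp
      exact ((measurable_const.sub (hgmeas.comp (measurable_id.const_smul (α ^ e)))).div
        measurable_const)
    exact (hm1.aestronglyMeasurable.mul
      (hp.mul (Complex.continuous_conj.comp_aestronglyMeasurable hq)))
  · -- bound
    filter_upwards [self_mem_nhdsWithin] with α (hα : 0 < α)
    filter_upwards with x
    have hαe : (0:ℝ) < α ^ e := Real.rpow_pos_of_pos hα e
    have hασ : (0:ℝ) < α ^ σ := Real.rpow_pos_of_pos hα σ
    have hkey : 1 - g ((α ^ e) • x) ≤ C * (α ^ σ * ‖x‖ ^ ρ) := by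
      have h1 := hCb ((α ^ e) • x)
      have h2 : ‖(α ^ e) • x‖ ^ ρ = α ^ σ * ‖x‖ ^ ρ := by
        rw [norm_smul, Real.norm_eq_abs, _root_.abs_of_pos hαe,
          Real.mul_rpow hαe.le (norm_nonneg x), ← Real.rpow_mul hα.le, heρ]
      rw [h2] at h1; linarith
    have hnn : 0 ≤ 1 - g ((α ^ e) • x) := by linarith [hgle ((α ^ e) • x)]
    have hr : (0:ℝ) ≤ (1 - g ((α ^ e) • x)) / α ^ σ := div_nonneg hnn hασ.le
    have hrle : (1 - g ((α ^ e) • x)) / α ^ σ ≤ C * ‖x‖ ^ ρ := by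
      rw [div_le_iff₀ hασ]
      calc 1 - g ((α ^ e) • x) ≤ C * (α ^ σ * ‖x‖ ^ ρ) := hkey
        _ = C * ‖x‖ ^ ρ * α ^ σ := by ring
    have hnorm : ‖(((1 - g ((α ^ e) • x)) / α ^ σ : ℝ) : ℂ) * (p x * conj (q x))‖
        = ((1 - g ((α ^ e) • x)) / α ^ σ) * (‖p x‖ * ‖q x‖) := by
      rw [norm_mul, norm_mul, Complex.norm_real, Real.norm_eq_abs,
        _root_.abs_of_nonneg hr, RCLike.norm_conj]
    rw [hnorm]
    have hA : (‖x‖ ^ (ρ/2)) ^ 2 = ‖x‖ ^ ρ := by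
      rw [← Real.rpow_natCast (‖x‖ ^ (ρ/2)) 2, ← Real.rpow_mul (norm_nonneg x)]
      norm_num
    have hAMGM : ‖x‖ ^ ρ * (‖p x‖ * ‖q x‖)
        ≤ ‖x‖ ^ ρ * ‖p x‖ ^ 2 + ‖x‖ ^ ρ * ‖q x‖ ^ 2 := by
      have h0' : 0 ≤ ‖x‖ ^ ρ * (‖p x‖ * ‖q x‖) := by positivity
      rw [← hA] at h0' ⊢
      nlinarith [sq_nonneg (‖x‖ ^ (ρ/2) * ‖p x‖ - ‖x‖ ^ (ρ/2) * ‖q x‖), h0']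
    calc (1 - g ((α ^ e) • x)) / α ^ σ * (‖p x‖ * ‖q x‖)
        ≤ C * ‖x‖ ^ ρ * (‖p x‖ * ‖q x‖) := by
          apply mul_le_mul_of_nonneg_right hrle (by positivity)
      _ = C * (‖x‖ ^ ρ * (‖p x‖ * ‖q x‖)) := by ring
      _ ≤ C * (‖x‖ ^ ρ * ‖p x‖ ^ 2 + ‖x‖ ^ ρ * ‖q x‖ ^ 2) :=
          mul_le_mul_of_nonneg_left hAMGM hC.le
  · exact hbd_int
  · -- pointwise limit
    filter_upwards with x
    have h1 : Tendsto (fun α : ℝ => (1 - g ((α ^ e) • x)) / (α ^ e) ^ ρ)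
        (𝓝[>] (0:ℝ)) (𝓝 (Θ x)) := (hlim x).comp (tendsto_rpow_nhdsGT he)
    have h2 : Tendsto (fun α : ℝ => ((1 - g ((α ^ e) • x)) / α ^ σ : ℝ))
        (𝓝[>] (0:ℝ)) (𝓝 (Θ x)) := by
      refine h1.congr' ?_
      filter_upwards [self_mem_nhdsWithin] with α (hα : 0 < α)
      rw [← Real.rpow_mul hα.le, heρ]
    have h3 : Tendsto (fun α : ℝ => (((1 - g ((α ^ e) • x)) / α ^ σ : ℝ) : ℂ))
        (𝓝[>] (0:ℝ)) (𝓝 ((Θ x : ℝ) : ℂ)) :=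
      (Complex.continuous_ofReal.tendsto _).comp h2
    exact h3.mul_const _

lemma div_expand (A B c : ℝ) (hc : c ≠ 0) : A ^ 2 * B / c = (A / c) * A * B := by
  rw [div_mul_eq_mul_div, div_mul_eq_mul_div, mul_div_assoc, mul_div_assoc, sq]

/-- Error DCT lemma: `∫ (1-g(α^e • x))² ‖p x‖² / α^σ → 0`. -/
lemma conv_err {g : Ed d → ℝ} {ρ σ e C C0 : ℝ} (hρ : 0 < ρ) (hσ : 0 < σ) (he : 0 < e)
    (heρ : e * ρ = σ) (hgmeas : Measurable g)
    (hgle : ∀ x, g x ≤ 1) (hgb : ∀ x, |g x| ≤ C0)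
    (hC : 0 < C) (hCb : ∀ x : Ed d, 1 - g x ≤ C * ‖x‖ ^ ρ)
    {p : Ed d → ℂ}
    (hp : AEStronglyMeasurable p (volume : Measure (Ed d)))
    (hip : Integrable (fun x : Ed d => ‖x‖ ^ ρ * ‖p x‖ ^ 2) volume) :
    Tendsto (fun α : ℝ =>
        ∫ x : Ed d, (1 - g ((α ^ e) • x)) ^ 2 * ‖p x‖ ^ 2 / α ^ σ)
      (𝓝[>] (0:ℝ)) (𝓝 0) := by
  have hDCT : Tendsto (fun α : ℝ =>
        ∫ x : Ed d, (1 - g ((α ^ e) • x)) ^ 2 * ‖p x‖ ^ 2 / α ^ σ)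
      (𝓝[>] (0:ℝ)) (𝓝 (∫ _ : Ed d, (0:ℝ))) := by
   apply tendsto_integral_filter_of_dominated_convergence
    (bound := fun x : Ed d => C * (1 + C0) * (‖x‖ ^ ρ * ‖p x‖ ^ 2))
   · filter_upwards [self_mem_nhdsWithin] with α (hα : 0 < α)
     have hm1 : Measurable (fun x : Ed d => (1 - g ((α ^ e) • x)) ^ 2 / α ^ σ) :=
       ((measurable_const.sub (hgmeas.comp (measurable_id.const_smul (α ^ e)))).pow_const 2).div
         measurable_const
     have : (fun x : Ed d => (1 - g ((α ^ e) • x)) ^ 2 * ‖p x‖ ^ 2 / α ^ σ)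
         = fun x => ((1 - g ((α ^ e) • x)) ^ 2 / α ^ σ) * ‖p x‖ ^ 2 := by
       funext x; ring
     rw [this]
     exact hm1.aestronglyMeasurable.mul
      ((hp.norm.mul hp.norm).congr (by filter_upwards with y; simp [sq]))
   · filter_upwards [self_mem_nhdsWithin] with α (hα : 0 < α)
     filter_upwards with x
     have hαe : (0:ℝ) < α ^ e := Real.rpow_pos_of_pos hα e
     have hασ : (0:ℝ) < α ^ σ := Real.rpow_pos_of_pos hα σ
     have hkey : 1 - g ((α ^ e) • x) ≤ C * (α ^ σ * ‖x‖ ^ ρ) := by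
       have h1 := hCb ((α ^ e) • x)
       have h2 : ‖(α ^ e) • x‖ ^ ρ = α ^ σ * ‖x‖ ^ ρ := by
         rw [norm_smul, Real.norm_eq_abs, _root_.abs_of_pos hαe,
           Real.mul_rpow hαe.le (norm_nonneg x), ← Real.rpow_mul hα.le, heρ]
       rw [h2] at h1; linarith
     have hnn : 0 ≤ 1 - g ((α ^ e) • x) := by linarith [hgle ((α ^ e) • x)]
     have hub : 1 - g ((α ^ e) • x) ≤ 1 + C0 := by
       have := (abs_le.mp (hgb ((α ^ e) • x))).1; linarith
     have hr : (0:ℝ) ≤ (1 - g ((α ^ e) • x)) ^ 2 * ‖p x‖ ^ 2 / α ^ σ := by positivity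
     rw [Real.norm_eq_abs, _root_.abs_of_nonneg hr]
     have : (1 - g ((α ^ e) • x)) ^ 2 * ‖p x‖ ^ 2 / α ^ σ
         = ((1 - g ((α ^ e) • x)) / α ^ σ) * (1 - g ((α ^ e) • x)) * ‖p x‖ ^ 2 :=
       div_expand _ _ _ (ne_of_gt hασ)
     rw [this]
     have hrle : (1 - g ((α ^ e) • x)) / α ^ σ ≤ C * ‖x‖ ^ ρ := by
       rw [div_le_iff₀ hασ]
       calc 1 - g ((α ^ e) • x) ≤ C * (α ^ σ * ‖x‖ ^ ρ) := hkey
         _ = C * ‖x‖ ^ ρ * α ^ σ := by ring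
     have h5 : (0:ℝ) ≤ (1 - g ((α ^ e) • x)) / α ^ σ := div_nonneg hnn hασ.le
     calc (1 - g ((α ^ e) • x)) / α ^ σ * (1 - g ((α ^ e) • x)) * ‖p x‖ ^ 2
         ≤ (C * ‖x‖ ^ ρ) * (1 + C0) * ‖p x‖ ^ 2 := by
           apply mul_le_mul_of_nonneg_right _ (sq_nonneg _)
           apply mul_le_mul hrle hub hnn (by positivity)
       _ = C * (1 + C0) * (‖x‖ ^ ρ * ‖p x‖ ^ 2) := by ring
   · exact hip.const_mul _
   · filter_upwards with x
     have hCb2 : ∀ α : ℝ, 0 < α →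
         (1 - g ((α ^ e) • x)) ^ 2 * ‖p x‖ ^ 2 / α ^ σ
           ≤ (C * ‖x‖ ^ ρ) * (C * (α ^ σ * ‖x‖ ^ ρ)) * ‖p x‖ ^ 2 := by
       intro α hα
       have hαe : (0:ℝ) < α ^ e := Real.rpow_pos_of_pos hα e
       have hασ : (0:ℝ) < α ^ σ := Real.rpow_pos_of_pos hα σ
       have hkey : 1 - g ((α ^ e) • x) ≤ C * (α ^ σ * ‖x‖ ^ ρ) := by
         have h1 := hCb ((α ^ e) • x)
         have h2 : ‖(α ^ e) • x‖ ^ ρ = α ^ σ * ‖x‖ ^ ρ := by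
           rw [norm_smul, Real.norm_eq_abs, _root_.abs_of_pos hαe,
             Real.mul_rpow hαe.le (norm_nonneg x), ← Real.rpow_mul hα.le, heρ]
         rw [h2] at h1; linarith
       have hnn : 0 ≤ 1 - g ((α ^ e) • x) := by linarith [hgle ((α ^ e) • x)]
       have hrle : (1 - g ((α ^ e) • x)) / α ^ σ ≤ C * ‖x‖ ^ ρ := by
         rw [div_le_iff₀ hασ]
         calc 1 - g ((α ^ e) • x) ≤ C * (α ^ σ * ‖x‖ ^ ρ) := hkey
           _ = C * ‖x‖ ^ ρ * α ^ σ := by ring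
       have expand : (1 - g ((α ^ e) • x)) ^ 2 * ‖p x‖ ^ 2 / α ^ σ
           = ((1 - g ((α ^ e) • x)) / α ^ σ) * (1 - g ((α ^ e) • x)) * ‖p x‖ ^ 2 :=
         div_expand _ _ _ (ne_of_gt hασ)
       rw [expand]
       apply mul_le_mul_of_nonneg_right _ (sq_nonneg _)
       exact mul_le_mul hrle hkey hnn (by positivity)
     apply squeeze_zero'
     · filter_upwards [self_mem_nhdsWithin] with α (hα : 0 < α)
       have hασ : (0:ℝ) < α ^ σ := Real.rpow_pos_of_pos hα σ
       positivity
     · filter_upwards [self_mem_nhdsWithin] with α (hα : 0 < α)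
       exact hCb2 α hα
     · have htσ : Tendsto (fun α : ℝ => α ^ σ) (𝓝[>] (0:ℝ)) (𝓝 0) :=
         (tendsto_rpow_nhdsGT hσ).mono_right nhdsWithin_le_nhds
       have : Tendsto (fun α : ℝ => (C * ‖x‖ ^ ρ) * (C * (α ^ σ * ‖x‖ ^ ρ)) * ‖p x‖ ^ 2)
           (𝓝[>] (0:ℝ)) (𝓝 ((C * ‖x‖ ^ ρ) * (C * (0 * ‖x‖ ^ ρ)) * ‖p x‖ ^ 2)) := by
         apply Tendsto.mul_const
         apply Tendsto.const_mul
         apply Tendsto.const_mul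
         exact htσ.mul_const _
       simpa using this

  simpa using hDCT

lemma sesq_eq_inner (u v : L2 d) : sesq u v = (inner ℂ v u : ℂ) := by
  rw [sesq, MeasureTheory.L2.inner_def]
  apply integral_congr_ae
  filter_upwards with x
  rw [RCLike.inner_apply]

lemma int_norm_sq (w : L2 d) :
    Integrable (fun x : Ed d => ‖(⇑w) x‖ ^ 2) volume := by
  have h := (MeasureTheory.Lp.memLp w).integrable_norm_rpow
    (by norm_num) (by norm_num)
  refine h.congr ?_
  filter_upwards with x
  rw [show ((2:ENNReal).toReal) = ((2:ℕ):ℝ) by norm_num, Real.rpow_natCast]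

lemma norm_sq_eq (w : L2 d) : ‖w‖ ^ 2 = ∫ x : Ed d, ‖(⇑w) x‖ ^ 2 := by
  have h1 : (inner ℂ w w : ℂ) = ((‖w‖ : ℂ)) ^ 2 := inner_self_eq_norm_sq_to_K w
  have h2 : (inner ℂ w w : ℂ) = ∫ x : Ed d, conj ((⇑w) x) * (⇑w) x := by
    rw [MeasureTheory.L2.inner_def]
    apply integral_congr_ae
    filter_upwards with x
    rw [RCLike.inner_apply]
    ring
  have h3 : (∫ x : Ed d, conj ((⇑w) x) * (⇑w) x)
      = ((∫ x : Ed d, ‖(⇑w) x‖ ^ 2 : ℝ) : ℂ) := by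
    calc (∫ x : Ed d, conj ((⇑w) x) * (⇑w) x)
        = ∫ x : Ed d, ((‖(⇑w) x‖ ^ 2 : ℝ) : ℂ) := by
          apply integral_congr_ae
          filter_upwards with x
          rw [RCLike.conj_mul]
          norm_cast
      _ = ((∫ x : Ed d, ‖(⇑w) x‖ ^ 2 : ℝ) : ℂ) := integral_ofReal
  have := h1.symm.trans (h2.trans h3)
  have h4 : ((‖w‖ ^ 2 : ℝ) : ℂ) = ((∫ x : Ed d, ‖(⇑w) x‖ ^ 2 : ℝ) : ℂ) := by
    push_cast
    exact this
  exact_mod_cast h4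

/-- Self-adjointness of multiplication by a real function. -/
lemma mul_adjoint {m : Ed d → ℝ} {z w Z W : L2 d}
    (hZ : (⇑Z : Ed d → ℂ) =ᵐ[volume] fun x => (m x : ℂ) * (⇑z) x)
    (hW : (⇑W : Ed d → ℂ) =ᵐ[volume] fun x => (m x : ℂ) * (⇑w) x) :
    (inner ℂ Z w : ℂ) = inner ℂ z W := by
  rw [MeasureTheory.L2.inner_def, MeasureTheory.L2.inner_def]
  apply integral_congr_ae
  filter_upwards [hZ, hW] with x h1 h2
  rw [RCLike.inner_apply, RCLike.inner_apply, h1, h2, map_mul, Complex.conj_ofReal]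
  ring

/-- `⟪w, z - Z⟫ = ∫ (1 - m) (z * conj w)` when `Z = m z` a.e. -/
lemma inner_sub_formula {m : Ed d → ℝ} {z w Z : L2 d}
    (hZ : (⇑Z : Ed d → ℂ) =ᵐ[volume] fun x => (m x : ℂ) * (⇑z) x) :
    (inner ℂ w (z - Z) : ℂ)
      = ∫ x : Ed d, ((1 - m x : ℝ) : ℂ) * ((⇑z) x * conj ((⇑w) x)) := by
  rw [MeasureTheory.L2.inner_def]
  apply integral_congr_ae
  filter_upwards [hZ, MeasureTheory.Lp.coeFn_sub z Z] with x h1 h2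
  rw [RCLike.inner_apply, h2, Pi.sub_apply, h1]
  push_cast
  ring

/-- `‖z - Z‖² = ∫ (1 - m)² ‖z‖²` when `Z = m z` a.e. -/
lemma norm_sub_sq {m : Ed d → ℝ} {z Z : L2 d}
    (hZ : (⇑Z : Ed d → ℂ) =ᵐ[volume] fun x => (m x : ℂ) * (⇑z) x) :
    ‖z - Z‖ ^ 2 = ∫ x : Ed d, (1 - m x) ^ 2 * ‖(⇑z) x‖ ^ 2 := by
  rw [norm_sq_eq]
  apply integral_congr_ae
  filter_upwards [hZ, MeasureTheory.Lp.coeFn_sub z Z] with x h1 h2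
  rw [h2, Pi.sub_apply, h1]
  have : (⇑z) x - (m x : ℂ) * (⇑z) x = ((1 - m x : ℝ) : ℂ) * (⇑z) x := by
    push_cast; ring
  rw [this, norm_mul, Complex.norm_real, Real.norm_eq_abs, mul_pow, _root_.sq_abs]

/-- `‖Z‖ ≤ C ‖z‖` for multiplication by `m` with `|m| ≤ C`. -/
lemma norm_mul_le {m : Ed d → ℝ} {z Z : L2 d} {C : ℝ} (hC : 0 ≤ C)
    (hm : ∀ x, |m x| ≤ C)
    (hZ : (⇑Z : Ed d → ℂ) =ᵐ[volume] fun x => (m x : ℂ) * (⇑z) x) :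
    ‖Z‖ ≤ C * ‖z‖ := by
  have h1 : ‖Z‖ ^ 2 ≤ (C * ‖z‖) ^ 2 := by
    rw [norm_sq_eq]
    have h2 : (∫ x : Ed d, ‖(⇑Z) x‖ ^ 2) ≤ ∫ x : Ed d, C ^ 2 * ‖(⇑z) x‖ ^ 2 := by
      apply integral_mono_ae ?_ ((int_norm_sq z).const_mul _)
      · filter_upwards [hZ] with x h1
        rw [h1, norm_mul, Complex.norm_real, Real.norm_eq_abs, mul_pow, _root_.sq_abs]
        apply mul_le_mul_of_nonneg_right _ (sq_nonneg _)
        have h3 := hm x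
        have h4 := abs_nonneg (m x)
        nlinarith [_root_.sq_abs (m x)]
      · -- integrability of ‖Z x‖^2
        exact (int_norm_sq Z)
    calc (∫ x : Ed d, ‖(⇑Z) x‖ ^ 2) ≤ ∫ x : Ed d, C ^ 2 * ‖(⇑z) x‖ ^ 2 := h2
      _ = C ^ 2 * ∫ x : Ed d, ‖(⇑z) x‖ ^ 2 := by rw [integral_const_mul]
      _ = (C * ‖z‖) ^ 2 := by rw [← norm_sq_eq]; ring
  have hZ0 := norm_nonneg Z
  have hCz : 0 ≤ C * ‖z‖ := by positivity
  nlinarith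


end Stmt9Aux

set_option maxHeartbeats 2000000 in
/-- For all `u, v ∈ D[T]`,
`α^{-σ}(⟨u,v⟩ - ⟨B_α u, v⟩) → T[u,v]` as `α → 0⁺`, where
`T[u,v] = ∫ Ψ_γ(ξ) û(ξ) conj(v̂(ξ)) dξ + 2 ∫ Φ_β(x) u(x) conj(v(x)) dx`. -/
theorem stmt_9 (d : ℕ) (hd : 1 ≤ d)
    (a V : Ed d → ℝ) (ha_meas : Measurable a) (hV_meas : Measurable V)
    (Ca : ℝ) (ha_bdd : ∀ ξ, |a ξ| ≤ Ca) (Cv : ℝ) (hV_bdd : ∀ x, |V x| ≤ Cv)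
    (ha_decay : Tendsto a (cocompact (Ed d)) (𝓝 0))
    (hV_decay : Tendsto V (cocompact (Ed d)) (𝓝 0))
    (ha0 : a 0 = 1) (hV0 : V 0 = 1)
    (ha_le : ∀ ξ, a ξ ≤ 1) (ha_lt : ∀ ξ : Ed d, ξ ≠ 0 → a ξ < 1)
    (hV_lt : ∀ x : Ed d, x ≠ 0 → V x < 1)
    (c : ℝ) (hc : 0 < c)
    (hV_rng : ∀ᵐ x : Ed d ∂(volume : Measure (Ed d)), -1 + c ≤ V x ∧ V x ≤ 1)
    (β γ : ℝ) (hβ : 0 < β) (hγ : 0 < γ)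
    (Φ Ψ : Ed d → ℝ)
    (hΦ_smooth : ContDiffOn ℝ (⊤ : ℕ∞) Φ {x : Ed d | x ≠ 0})
    (hΨ_smooth : ContDiffOn ℝ (⊤ : ℕ∞) Ψ {ξ : Ed d | ξ ≠ 0})
    (hΦ_pos : ∀ x : Ed d, x ≠ 0 → 0 < Φ x) (hΨ_pos : ∀ ξ : Ed d, ξ ≠ 0 → 0 < Ψ ξ)
    (hΦ_hom : ∀ t : ℝ, 0 < t → ∀ x : Ed d, Φ (t • x) = t ^ β * Φ x)
    (hΨ_hom : ∀ t : ℝ, 0 < t → ∀ ξ : Ed d, Ψ (t • ξ) = t ^ γ * Ψ ξ)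
    (hV_asymp : (fun x : Ed d => V x - (1 - Φ x)) =o[𝓝 0] fun x : Ed d => ‖x‖ ^ β)
    (ha_asymp : (fun ξ : Ed d => a ξ - (1 - Ψ ξ)) =o[𝓝 0] fun ξ : Ed d => ‖ξ‖ ^ γ)
    (σ : ℝ) (hσ : σ = β * γ / (β + γ))
    (F : L2 d ≃ₗᵢ[ℂ] L2 d) (hF : IsPaperFourier F)
    (MW : ℝ → L2 d →L[ℂ] L2 d)
    (hMW : ∀ α : ℝ, 0 < α → ∀ u : L2 d,
      (⇑(MW α u) : Ed d → ℂ) =ᵐ[volume]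
        fun x => (V ((α ^ (γ / (γ + β)) : ℝ) • x) : ℂ) * (⇑u) x)
    (Mb : ℝ → L2 d →L[ℂ] L2 d)
    (hMb : ∀ α : ℝ, 0 < α → ∀ u : L2 d,
      (⇑(Mb α u) : Ed d → ℂ) =ᵐ[volume]
        fun ξ => (a ((α ^ (β / (γ + β)) : ℝ) • ξ) : ℂ) * (⇑u) ξ)
    (B : ℝ → L2 d → L2 d)
    (hB : ∀ (α : ℝ) (u : L2 d), B α u = MW α (F.symm (Mb α (F (MW α u)))))
    (u v : L2 d) (hu : u ∈ DTset F γ β) (hv : v ∈ DTset F γ β) :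
    Tendsto
      (fun α : ℝ => ((α ^ (-σ) : ℝ) : ℂ) * (sesq u v - sesq (B α u) v))
      (𝓝[>] (0 : ℝ))
      (𝓝 ((∫ ξ : Ed d, (Ψ ξ : ℂ) * ((⇑(F u)) ξ * conj ((⇑(F v)) ξ)))
        + 2 * ∫ x : Ed d, (Φ x : ℂ) * ((⇑u) x * conj ((⇑v) x)))) := by
  classical
  -- basic positivity
  have hβγ : (0:ℝ) < β + γ := by linarith
  have hγβ : (0:ℝ) < γ + β := by linarith
  have hσpos : 0 < σ := by rw [hσ]; positivity
  have heaγ : (β / (γ + β)) * γ = σ := by rw [hσ]; field_simp; ring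
  have heVβ : (γ / (γ + β)) * β = σ := by rw [hσ]; field_simp; ring
  have hea : 0 < β / (γ + β) := by positivity
  have heV : 0 < γ / (γ + β) := by positivity
  have hCa0 : 0 ≤ Ca := le_trans (abs_nonneg _) (ha_bdd 0)
  have hCv0 : 0 ≤ Cv := le_trans (abs_nonneg _) (hV_bdd 0)
  have hVle : ∀ x, V x ≤ 1 := by
    intro x
    rcases eq_or_ne x 0 with rfl | hx
    · rw [hV0]
    · exact (hV_lt x hx).le
  -- uniform bounds
  obtain ⟨CΨ, hCΨ, hCΨb⟩ := Stmt9Aux.key_bound hγ ha_bdd ha_le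
    hΨ_smooth.continuousOn hΨ_hom ha_asymp
  obtain ⟨CΦ, hCΦ, hCΦb⟩ := Stmt9Aux.key_bound hβ hV_bdd hVle
    hΦ_smooth.continuousOn hΦ_hom hV_asymp
  -- pointwise limits
  have hlima := Stmt9Aux.key_tendsto hγ ha0 hΨ_hom ha_asymp
  have hlimV := Stmt9Aux.key_tendsto hβ hV0 hΦ_hom hV_asymp
  -- measurability of the Lp representatives
  have hu_m := (MeasureTheory.Lp.aestronglyMeasurable u)
  have hv_m := (MeasureTheory.Lp.aestronglyMeasurable v)
  have hFu_m := (MeasureTheory.Lp.aestronglyMeasurable (F u))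
  have hFv_m := (MeasureTheory.Lp.aestronglyMeasurable (F v))
  -- main convergent pieces
  set G1 : ℝ → ℂ := fun α =>
    ∫ ξ : Ed d, (((1 - a ((α ^ (β / (γ + β))) • ξ)) / α ^ σ : ℝ) : ℂ) *
      ((⇑(F u)) ξ * conj ((⇑(F v)) ξ)) with hG1def
  set G2 : ℝ → ℂ := fun α =>
    ∫ x : Ed d, (((1 - V ((α ^ (γ / (γ + β))) • x)) / α ^ σ : ℝ) : ℂ) *
      ((⇑u) x * conj ((⇑v) x)) with hG2def
  have hG1 : Tendsto G1 (𝓝[>] (0:ℝ))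
      (𝓝 (∫ ξ : Ed d, (Ψ ξ : ℂ) * ((⇑(F u)) ξ * conj ((⇑(F v)) ξ)))) :=
    Stmt9Aux.conv_main hγ hσpos hea heaγ ha_meas ha_le hCΨ hCΨb hlima
      hFu_m hFv_m hu.1 hv.1
  have hG2 : Tendsto G2 (𝓝[>] (0:ℝ))
      (𝓝 (∫ x : Ed d, (Φ x : ℂ) * ((⇑u) x * conj ((⇑v) x)))) :=
    Stmt9Aux.conv_main hβ hσpos heV heVβ hV_meas hVle hCΦ hCΦb hlimV
      hu_m hv_m hu.2 hv.2
  -- error norms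
  set nWu : ℝ → ℝ := fun α =>
    ∫ x : Ed d, (1 - V ((α ^ (γ / (γ + β))) • x)) ^ 2 * ‖(⇑u) x‖ ^ 2 / α ^ σ with hnWudef
  set nWv : ℝ → ℝ := fun α =>
    ∫ x : Ed d, (1 - V ((α ^ (γ / (γ + β))) • x)) ^ 2 * ‖(⇑v) x‖ ^ 2 / α ^ σ with hnWvdef
  set nbu : ℝ → ℝ := fun α =>
    ∫ ξ : Ed d, (1 - a ((α ^ (β / (γ + β))) • ξ)) ^ 2 * ‖(⇑(F u)) ξ‖ ^ 2 / α ^ σ with hnbudef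
  set nbv : ℝ → ℝ := fun α =>
    ∫ ξ : Ed d, (1 - a ((α ^ (β / (γ + β))) • ξ)) ^ 2 * ‖(⇑(F v)) ξ‖ ^ 2 / α ^ σ with hnbvdef
  have hnWu : Tendsto nWu (𝓝[>] (0:ℝ)) (𝓝 0) :=
    Stmt9Aux.conv_err hβ hσpos heV heVβ hV_meas hVle hV_bdd hCΦ hCΦb hu_m hu.2
  have hnWv : Tendsto nWv (𝓝[>] (0:ℝ)) (𝓝 0) :=
    Stmt9Aux.conv_err hβ hσpos heV heVβ hV_meas hVle hV_bdd hCΦ hCΦb hv_m hv.2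
  have hnbu : Tendsto nbu (𝓝[>] (0:ℝ)) (𝓝 0) :=
    Stmt9Aux.conv_err hγ hσpos hea heaγ ha_meas ha_le ha_bdd hCΨ hCΨb hFu_m hu.1
  have hnbv : Tendsto nbv (𝓝[>] (0:ℝ)) (𝓝 0) :=
    Stmt9Aux.conv_err hγ hσpos hea heaγ ha_meas ha_le ha_bdd hCΨ hCΨb hFv_m hv.1
  -- nonnegativity of the error norms
  have hnn : ∀ (n : ℝ → ℝ), (∀ α ∈ Set.Ioi (0:ℝ), 0 ≤ n α) → True := fun _ _ => trivial
  -- norms of the differences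
  have hnormW : ∀ α ∈ Set.Ioi (0:ℝ), ∀ z : L2 d,
      ‖z - MW α z‖ ^ 2 = ∫ x : Ed d, (1 - V ((α ^ (γ / (γ + β))) • x)) ^ 2 * ‖(⇑z) x‖ ^ 2 :=
    fun α hα z => Stmt9Aux.norm_sub_sq (hMW α hα z)
  have hnormb : ∀ α ∈ Set.Ioi (0:ℝ), ∀ z : L2 d,
      ‖z - F.symm (Mb α (F z))‖ ^ 2
        = ∫ ξ : Ed d, (1 - a ((α ^ (β / (γ + β))) • ξ)) ^ 2 * ‖(⇑(F z)) ξ‖ ^ 2 := by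
    intro α hα z
    have h1 : ‖z - F.symm (Mb α (F z))‖ = ‖F z - Mb α (F z)‖ := by
      rw [← F.norm_map (z - F.symm (Mb α (F z))), map_sub, F.apply_symm_apply]
    rw [h1]
    exact Stmt9Aux.norm_sub_sq (hMb α hα (F z))
  -- adjointness
  have W_adj : ∀ α ∈ Set.Ioi (0:ℝ), ∀ z w : L2 d,
      (inner ℂ (MW α z) w : ℂ) = inner ℂ z (MW α w) :=
    fun α hα z w => Stmt9Aux.mul_adjoint (hMW α hα z) (hMW α hα w)
  have bop_adj : ∀ α ∈ Set.Ioi (0:ℝ), ∀ z w : L2 d,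
      (inner ℂ (F.symm (Mb α (F z))) w : ℂ) = inner ℂ z (F.symm (Mb α (F w))) := by
    intro α hα z w
    have h1 : (inner ℂ (F.symm (Mb α (F z))) w : ℂ) = inner ℂ (Mb α (F z)) (F w) := by
      rw [← F.inner_map_map (F.symm (Mb α (F z))) w, F.apply_symm_apply]
    have h2 : (inner ℂ z (F.symm (Mb α (F w))) : ℂ) = inner ℂ (F z) (Mb α (F w)) := by
      rw [← F.inner_map_map z (F.symm (Mb α (F w))), F.apply_symm_apply]
    rw [h1, h2]
    exact Stmt9Aux.mul_adjoint (hMb α hα (F z)) (hMb α hα (F w))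
  -- scaled inner ℂ product formulas
  have hinner_b : ∀ α ∈ Set.Ioi (0:ℝ),
      (inner ℂ v (u - F.symm (Mb α (F u))) : ℂ)
        = ∫ ξ : Ed d, ((1 - a ((α ^ (β / (γ + β))) • ξ) : ℝ) : ℂ) *
            ((⇑(F u)) ξ * conj ((⇑(F v)) ξ)) := by
    intro α hα
    have h1 : (inner ℂ v (u - F.symm (Mb α (F u))) : ℂ)
        = inner ℂ (F v) (F u - Mb α (F u)) := by
      rw [← F.inner_map_map v (u - F.symm (Mb α (F u))), map_sub, F.apply_symm_apply]
    rw [h1]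
    exact Stmt9Aux.inner_sub_formula (hMb α hα (F u))
  have hinner_W : ∀ α ∈ Set.Ioi (0:ℝ),
      (inner ℂ v (u - MW α u) : ℂ)
        = ∫ x : Ed d, ((1 - V ((α ^ (γ / (γ + β))) • x) : ℝ) : ℂ) *
            ((⇑u) x * conj ((⇑v) x)) :=
    fun α hα => Stmt9Aux.inner_sub_formula (hMW α hα u)
  -- rescaling to G1, G2
  have hscale : ∀ α ∈ Set.Ioi (0:ℝ), ∀ m : Ed d → ℝ, ∀ p q : Ed d → ℂ,
      ((α ^ (-σ) : ℝ) : ℂ) * ∫ x : Ed d, ((1 - m x : ℝ) : ℂ) * (p x * conj (q x))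
        = ∫ x : Ed d, (((1 - m x) / α ^ σ : ℝ) : ℂ) * (p x * conj (q x)) := by
    intro α hα m p q
    rw [← integral_const_mul]
    apply integral_congr_ae
    filter_upwards with x
    have hne : ((α ^ σ : ℝ) : ℂ) ≠ 0 := by
      simp only [ne_eq, Complex.ofReal_eq_zero]
      exact ne_of_gt (Real.rpow_pos_of_pos hα σ)
    rw [Real.rpow_neg (le_of_lt hα)]
    push_cast
    field_simp
  -- the error function
  set E : ℝ → ℂ := fun α =>
    ((α ^ (-σ) : ℝ) : ℂ) * (sesq u v - sesq (B α u) v) - G1 α - 2 * G2 α with hEdef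
  -- identity: E α equals the error inner ℂ products
  have hEeq : ∀ α ∈ Set.Ioi (0:ℝ),
      E α = ((α ^ (-σ) : ℝ) : ℂ) *
        ((inner ℂ (v - MW α v) (F.symm (Mb α (F u)) - u) : ℂ)
          + (inner ℂ (F.symm (Mb α (F (MW α v))) - v) (u - MW α u) : ℂ)) := by
    intro α hα
    have hα' : (0:ℝ) < α := hα
    -- rewrite sesq via inner
    have hs1 : sesq u v = (inner ℂ v u : ℂ) := Stmt9Aux.sesq_eq_inner u v
    have hs2 : sesq (B α u) v = (inner ℂ v (B α u) : ℂ) := Stmt9Aux.sesq_eq_inner _ v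
    have hBu : (inner ℂ v (B α u) : ℂ)
        = inner ℂ (F.symm (Mb α (F (MW α v)))) (MW α u) := by
      rw [hB]
      have h1 : (inner ℂ v (MW α (F.symm (Mb α (F (MW α u))))) : ℂ)
          = inner ℂ (MW α v) (F.symm (Mb α (F (MW α u)))) :=
        (W_adj α hα v _).symm
      rw [h1]
      exact (bop_adj α hα (MW α v) (MW α u)).symm
    -- the big algebraic identity
    have e1 : (inner ℂ v (MW α u) : ℂ) = inner ℂ (MW α v) u := (W_adj α hα v u).symm
    have e2 : (inner ℂ (MW α v) (F.symm (Mb α (F u))) : ℂ)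
        = inner ℂ (F.symm (Mb α (F (MW α v)))) u := (bop_adj α hα (MW α v) u).symm
    have hid : (inner ℂ v u : ℂ) - inner ℂ (F.symm (Mb α (F (MW α v)))) (MW α u)
        = (inner ℂ v (u - F.symm (Mb α (F u))) : ℂ)
          + 2 * (inner ℂ v (u - MW α u) : ℂ)
          + (inner ℂ (v - MW α v) (F.symm (Mb α (F u)) - u) : ℂ)
          + (inner ℂ (F.symm (Mb α (F (MW α v))) - v) (u - MW α u) : ℂ) := by
      simp only [inner_sub_left, inner_sub_right]
      linear_combination e1 + e2
    have hg1 : ((α ^ (-σ) : ℝ) : ℂ) * (inner ℂ v (u - F.symm (Mb α (F u))) : ℂ) = G1 α := by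
      rw [hinner_b α hα, hG1def]
      exact hscale α hα _ _ _
    have hg2 : ((α ^ (-σ) : ℝ) : ℂ) * (inner ℂ v (u - MW α u) : ℂ) = G2 α := by
      rw [hinner_W α hα, hG2def]
      exact hscale α hα _ _ _
    rw [hEdef]
    simp only
    rw [hs1, hs2, hBu, hid]
    rw [mul_add, mul_add, mul_add]
    rw [hg1]
    have : ((α ^ (-σ) : ℝ) : ℂ) * (2 * (inner ℂ v (u - MW α u) : ℂ))
        = 2 * G2 α := by
      rw [← hg2]; ring
    rw [this]
    ring
  -- bound on the error
  set bound : ℝ → ℝ := fun α =>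
    Real.sqrt (nWv α) * Real.sqrt (nbu α)
      + (Ca * Real.sqrt (nWv α) + Real.sqrt (nbv α)) * Real.sqrt (nWu α) with hbdef
  have hbound0 : Tendsto bound (𝓝[>] (0:ℝ)) (𝓝 0) := by
    have hsq : ∀ {n : ℝ → ℝ}, Tendsto n (𝓝[>] (0:ℝ)) (𝓝 0) →
        Tendsto (fun α => Real.sqrt (n α)) (𝓝[>] (0:ℝ)) (𝓝 0) := by
      intro n hn
      have := (Real.continuous_sqrt.tendsto 0).comp hn
      simpa [Function.comp_def] using this
    have h := ((hsq hnWv).mul (hsq hnbu)).add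
      ((((hsq hnWv).const_mul Ca).add (hsq hnbv)).mul (hsq hnWu))
    simpa using h
  have hEbound : ∀ᶠ α in 𝓝[>] (0:ℝ), ‖E α‖ ≤ bound α := by
    filter_upwards [self_mem_nhdsWithin] with α (hα : 0 < α)
    have hα' : α ∈ Set.Ioi (0:ℝ) := hα
    have hασ : (0:ℝ) < α ^ σ := Real.rpow_pos_of_pos hα σ
    -- norms in terms of n-functions
    have hsqrtprod : ∀ (n : ℝ → ℝ) (z Z : L2 d),
        ‖z - Z‖ ^ 2 = n α * α ^ σ → 0 ≤ n α → ‖z - Z‖ = Real.sqrt (n α) * Real.sqrt (α ^ σ) := by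
      intro n z Z h hn
      rw [← Real.sqrt_mul hn, ← h, Real.sqrt_sq (norm_nonneg _)]
    have hnWv_nn : 0 ≤ nWv α := by
      rw [hnWvdef]
      apply integral_nonneg
      intro x; positivity
    have hnWu_nn : 0 ≤ nWu α := by
      rw [hnWudef]; apply integral_nonneg; intro x; positivity
    have hnbu_nn : 0 ≤ nbu α := by
      rw [hnbudef]; apply integral_nonneg; intro x; positivity
    have hnbv_nn : 0 ≤ nbv α := by
      rw [hnbvdef]; apply integral_nonneg; intro x; positivity
    have hWv : ‖v - MW α v‖ = Real.sqrt (nWv α) * Real.sqrt (α ^ σ) := by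
      apply hsqrtprod _ _ _ _ hnWv_nn
      rw [hnormW α hα' v, hnWvdef]
      simp only
      rw [integral_div, div_mul_cancel₀ _ (ne_of_gt hασ)]
    have hWu : ‖u - MW α u‖ = Real.sqrt (nWu α) * Real.sqrt (α ^ σ) := by
      apply hsqrtprod _ _ _ _ hnWu_nn
      rw [hnormW α hα' u, hnWudef]
      simp only
      rw [integral_div, div_mul_cancel₀ _ (ne_of_gt hασ)]
    have hbu : ‖u - F.symm (Mb α (F u))‖ = Real.sqrt (nbu α) * Real.sqrt (α ^ σ) := by
      apply hsqrtprod _ _ _ _ hnbu_nn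
      rw [hnormb α hα' u, hnbudef]
      simp only
      rw [integral_div, div_mul_cancel₀ _ (ne_of_gt hασ)]
    have hbv : ‖v - F.symm (Mb α (F v))‖ = Real.sqrt (nbv α) * Real.sqrt (α ^ σ) := by
      apply hsqrtprod _ _ _ _ hnbv_nn
      rw [hnormb α hα' v, hnbvdef]
      simp only
      rw [integral_div, div_mul_cancel₀ _ (ne_of_gt hασ)]
    -- operator norm bound for bop
    have hbopnorm : ∀ z : L2 d, ‖F.symm (Mb α (F z))‖ ≤ Ca * ‖z‖ := by
      intro z
      rw [F.symm.norm_map]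
      calc ‖Mb α (F z)‖ ≤ Ca * ‖F z‖ :=
            Stmt9Aux.norm_mul_le hCa0 (fun x => ha_bdd _) (hMb α hα (F z))
        _ = Ca * ‖z‖ := by rw [F.norm_map]
    -- second error factor
    have hfact2 : ‖F.symm (Mb α (F (MW α v))) - v‖
        ≤ (Ca * Real.sqrt (nWv α) + Real.sqrt (nbv α)) * Real.sqrt (α ^ σ) := by
      have hdecomp : F.symm (Mb α (F (MW α v))) - v
          = F.symm (Mb α (F (MW α v - v))) + (F.symm (Mb α (F v)) - v) := by
        rw [map_sub, map_sub, map_sub]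
        abel
      rw [hdecomp]
      calc ‖F.symm (Mb α (F (MW α v - v))) + (F.symm (Mb α (F v)) - v)‖
          ≤ ‖F.symm (Mb α (F (MW α v - v)))‖ + ‖F.symm (Mb α (F v)) - v‖ :=
            norm_add_le _ _
        _ ≤ Ca * ‖MW α v - v‖ + ‖F.symm (Mb α (F v)) - v‖ := by
            have := hbopnorm (MW α v - v)
            linarith
        _ = Ca * ‖v - MW α v‖ + ‖v - F.symm (Mb α (F v))‖ := by
            rw [norm_sub_rev (MW α v) v, norm_sub_rev (F.symm (Mb α (F v))) v]
        _ = (Ca * Real.sqrt (nWv α) + Real.sqrt (nbv α)) * Real.sqrt (α ^ σ) := by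
            rw [hWv, hbv]; ring
    -- put together
    rw [hEeq α hα']
    have hX1 : ‖(inner ℂ (v - MW α v) (F.symm (Mb α (F u)) - u) : ℂ)‖
        ≤ (Real.sqrt (nWv α) * Real.sqrt (nbu α)) * α ^ σ := by
      calc ‖(inner ℂ (v - MW α v) (F.symm (Mb α (F u)) - u) : ℂ)‖
          ≤ ‖v - MW α v‖ * ‖F.symm (Mb α (F u)) - u‖ := norm_inner_le_norm _ _
        _ = (Real.sqrt (nWv α) * Real.sqrt (nbu α)) * (Real.sqrt (α ^ σ) * Real.sqrt (α ^ σ)) := by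
            rw [hWv, norm_sub_rev, hbu]; ring
        _ = (Real.sqrt (nWv α) * Real.sqrt (nbu α)) * α ^ σ := by
            rw [Real.mul_self_sqrt hασ.le]
    have hX2 : ‖(inner ℂ (F.symm (Mb α (F (MW α v))) - v) (u - MW α u) : ℂ)‖
        ≤ ((Ca * Real.sqrt (nWv α) + Real.sqrt (nbv α)) * Real.sqrt (nWu α)) * α ^ σ := by
      calc ‖(inner ℂ (F.symm (Mb α (F (MW α v))) - v) (u - MW α u) : ℂ)‖
          ≤ ‖F.symm (Mb α (F (MW α v))) - v‖ * ‖u - MW α u‖ := norm_inner_le_norm _ _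
        _ ≤ ((Ca * Real.sqrt (nWv α) + Real.sqrt (nbv α)) * Real.sqrt (α ^ σ))
              * (Real.sqrt (nWu α) * Real.sqrt (α ^ σ)) := by
            apply mul_le_mul hfact2 (le_of_eq hWu) (norm_nonneg _)
            positivity
        _ = ((Ca * Real.sqrt (nWv α) + Real.sqrt (nbv α)) * Real.sqrt (nWu α))
              * (Real.sqrt (α ^ σ) * Real.sqrt (α ^ σ)) := by ring
        _ = ((Ca * Real.sqrt (nWv α) + Real.sqrt (nbv α)) * Real.sqrt (nWu α)) * α ^ σ := by
            rw [Real.mul_self_sqrt hασ.le]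
    have hc1 : ‖((α ^ (-σ) : ℝ) : ℂ)‖ = (α ^ σ)⁻¹ := by
      rw [Complex.norm_real, Real.norm_eq_abs, Real.rpow_neg hα.le,
        abs_of_pos (inv_pos.mpr hασ)]
    calc ‖((α ^ (-σ) : ℝ) : ℂ) *
          ((inner ℂ (v - MW α v) (F.symm (Mb α (F u)) - u) : ℂ)
            + (inner ℂ (F.symm (Mb α (F (MW α v))) - v) (u - MW α u) : ℂ))‖
        = (α ^ σ)⁻¹ * ‖(inner ℂ (v - MW α v) (F.symm (Mb α (F u)) - u) : ℂ)
            + (inner ℂ (F.symm (Mb α (F (MW α v))) - v) (u - MW α u) : ℂ)‖ := by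
          rw [norm_mul, hc1]
      _ ≤ (α ^ σ)⁻¹ * (‖(inner ℂ (v - MW α v) (F.symm (Mb α (F u)) - u) : ℂ)‖
            + ‖(inner ℂ (F.symm (Mb α (F (MW α v))) - v) (u - MW α u) : ℂ)‖) := by
          apply mul_le_mul_of_nonneg_left (norm_add_le _ _) (inv_pos.mpr hασ).le
      _ ≤ (α ^ σ)⁻¹ * ((Real.sqrt (nWv α) * Real.sqrt (nbu α)) * α ^ σ
            + ((Ca * Real.sqrt (nWv α) + Real.sqrt (nbv α)) * Real.sqrt (nWu α)) * α ^ σ) := by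
          apply mul_le_mul_of_nonneg_left _ (inv_pos.mpr hασ).le
          linarith
      _ = bound α := by
          rw [hbdef]
          field_simp
  have hE0 : Tendsto E (𝓝[>] (0:ℝ)) (𝓝 0) :=
    squeeze_zero_norm' hEbound hbound0
  -- conclude
  have hfinal := (hG1.add ((hG2.const_mul (2:ℂ)).add hE0))
  have heq : (fun α : ℝ => G1 α + ((2:ℂ) * G2 α + E α))
      = fun α : ℝ => ((α ^ (-σ) : ℝ) : ℂ) * (sesq u v - sesq (B α u) v) := by
    funext α
    rw [hEdef]
    ring
  rw [heq] at hfinal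
  simpa using hfinal
end
end

section
/- Fix n and for each α > 0 let ψ_α ∈ L²(ℝ^d) be a normalized eigenfunction of B_α with eigenvalue λ_α^{(n)}, and set θ_α := W_α ψ_α. Then ‖θ_α − ψ_α‖_{L²} → 0 as α → 0⁺. -/
open MeasureTheory Filter Complex Asymptotics ComplexConjugate
open scoped Topology

noncomputable section

section AuxStmt12

variable {d : ℕ}

local notation "⟪" x ", " y "⟫" => @inner ℂ _ _ x y

lemma sesq_eq_inner (w u : L2 d) : sesq w u = ⟪u, w⟫ := by
  rw [sesq, MeasureTheory.L2.inner_def]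
  exact integral_congr_ae (Filter.Eventually.of_forall fun x => by
    simp [RCLike.inner_apply, mul_comm])

lemma integrable_normsq (u : L2 d) :
    Integrable (fun x : Ed d => ‖(⇑u) x‖ ^ 2) volume := by
  have h := (MeasureTheory.memLp_two_iff_integrable_sq_norm
    (MeasureTheory.Lp.aestronglyMeasurable u)).mp (MeasureTheory.Lp.memLp u)
  exact h

lemma normsq_integral (u : L2 d) : ‖u‖ ^ 2 = ∫ x : Ed d, ‖(⇑u) x‖ ^ 2 := by
  have h1 : (‖u‖ : ℝ) ^ 2 = RCLike.re ⟪u, u⟫ := (@inner_self_eq_norm_sq ℂ _ _ _ _ u).symm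
  rw [h1, MeasureTheory.L2.inner_def, ← integral_re (MeasureTheory.L2.integrable_inner u u)]
  refine integral_congr_ae (Filter.Eventually.of_forall fun x => ?_)
  simp [RCLike.inner_apply, RCLike.conj_mul, ← Complex.ofReal_pow]

lemma inner_rep (u w : L2 d) (f : Ed d → ℝ)
    (hw : (⇑w : Ed d → ℂ) =ᵐ[volume] fun x => (f x : ℂ) * (⇑u) x) :
    (⟪u, w⟫).re = ∫ x : Ed d, f x * ‖(⇑u) x‖ ^ 2 := by
  rw [MeasureTheory.L2.inner_def]
  show RCLike.re (∫ a : Ed d, ⟪(⇑u) a, (⇑w) a⟫) = _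
  rw [← integral_re (MeasureTheory.L2.integrable_inner u w)]
  refine integral_congr_ae ?_
  filter_upwards [hw] with x hx
  simp only [RCLike.inner_apply, hx]
  have : (f x : ℂ) * (⇑u) x * (starRingEnd ℂ) ((⇑u) x)
      = (f x : ℂ) * ((starRingEnd ℂ) ((⇑u) x) * (⇑u) x) := by ring
  rw [this, RCLike.conj_mul]
  simp [← Complex.ofReal_pow]

lemma normsq_rep (u w : L2 d) (f : Ed d → ℝ)
    (hw : (⇑w : Ed d → ℂ) =ᵐ[volume] fun x => (f x : ℂ) * (⇑u) x) :
    ‖w‖ ^ 2 = ∫ x : Ed d, (f x) ^ 2 * ‖(⇑u) x‖ ^ 2 := by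
  rw [normsq_integral]
  refine integral_congr_ae ?_
  filter_upwards [hw] with x hx
  rw [hx]
  simp [norm_mul, mul_pow, Complex.sq_norm]

lemma integrable_rep (u w : L2 d) (f : Ed d → ℝ)
    (hw : (⇑w : Ed d → ℂ) =ᵐ[volume] fun x => (f x : ℂ) * (⇑u) x) :
    Integrable (fun x : Ed d => (f x) ^ 2 * ‖(⇑u) x‖ ^ 2) volume := by
  refine (integrable_congr ?_).mp (integrable_normsq w)
  filter_upwards [hw] with x hx
  rw [hx]
  simp [norm_mul, mul_pow, Complex.sq_norm]

lemma norm_le_rep (u w : L2 d) (f : Ed d → ℝ) (C : ℝ) (hC : ∀ x, |f x| ≤ C)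
    (hw : (⇑w : Ed d → ℂ) =ᵐ[volume] fun x => (f x : ℂ) * (⇑u) x) :
    ‖w‖ ≤ C * ‖u‖ := by
  have hC0 : 0 ≤ C := le_trans (abs_nonneg _) (hC 0)
  have h1 : ‖w‖ ^ 2 ≤ (C * ‖u‖) ^ 2 := by
    rw [normsq_rep u w f hw]
    have h2 : ∫ x : Ed d, (f x) ^ 2 * ‖(⇑u) x‖ ^ 2 ≤ ∫ x : Ed d, C ^ 2 * ‖(⇑u) x‖ ^ 2 := by
      refine integral_mono (integrable_rep u w f hw) ((integrable_normsq u).const_mul _) ?_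
      intro x
      have := sq_le_sq' (neg_le_of_abs_le (hC x)) (le_of_abs_le (hC x))
      exact mul_le_mul_of_nonneg_right this (by positivity)
    rw [MeasureTheory.integral_const_mul] at h2
    calc _ ≤ C ^ 2 * ∫ x : Ed d, ‖(⇑u) x‖ ^ 2 := h2
    _ = (C * ‖u‖) ^ 2 := by rw [← normsq_integral]; ring
  have := Real.sqrt_le_sqrt h1
  rwa [Real.sqrt_sq (norm_nonneg w), Real.sqrt_sq (by positivity)] at this

lemma mul_selfadj (u v w₁ w₂ : L2 d) (f : Ed d → ℝ)
    (h1 : (⇑w₁ : Ed d → ℂ) =ᵐ[volume] fun x => (f x : ℂ) * (⇑u) x)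
    (h2 : (⇑w₂ : Ed d → ℂ) =ᵐ[volume] fun x => (f x : ℂ) * (⇑v) x) :
    ⟪w₁, v⟫ = ⟪u, w₂⟫ := by
  rw [MeasureTheory.L2.inner_def, MeasureTheory.L2.inner_def]
  refine integral_congr_ae ?_
  filter_upwards [h1, h2] with x hx1 hx2
  simp only [RCLike.inner_apply, hx1, hx2, map_mul, Complex.conj_ofReal]
  ring


lemma rpow_tendsto {κ : ℝ} (hκ : 0 < κ) :
    Tendsto (fun α : ℝ => α ^ κ) (𝓝[>] (0:ℝ)) (𝓝 0) := by
  have h := (Real.continuousAt_rpow_const 0 κ (Or.inr hκ.le)).tendsto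
  rw [Real.zero_rpow hκ.ne'] at h
  exact h.mono_left nhdsWithin_le_nhds

lemma hom_tendsto_zero {β : ℝ} (hβ : 0 < β) (Φ : Ed d → ℝ)
    (hΦ_smooth : ContDiffOn ℝ (⊤ : ℕ∞) Φ {x : Ed d | x ≠ 0})
    (hΦ_hom : ∀ t : ℝ, 0 < t → ∀ x : Ed d, Φ (t • x) = t ^ β * Φ x) :
    Tendsto Φ (𝓝 (0 : Ed d)) (𝓝 0) := by
  -- bound on sphere
  obtain ⟨C, hC⟩ : ∃ C, ∀ y ∈ Metric.sphere (0 : Ed d) 1, ‖Φ y‖ ≤ C := by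
    refine (isCompact_sphere (0 : Ed d) 1).exists_bound_of_continuousOn
      (hΦ_smooth.continuousOn.mono ?_)
    intro y hy
    simp only [Metric.mem_sphere, dist_zero_right] at hy
    simp only [Set.mem_setOf_eq]
    intro h; rw [h] at hy; simp at hy
  have hC0 : 0 ≤ max C 0 := le_max_right _ _
  have hΦ0 : Φ 0 = 0 := by
    have h2 := hΦ_hom 2 (by norm_num) 0
    rw [smul_zero] at h2
    nlinarith [Real.rpow_natCast (2:ℝ) 1, Real.rpow_lt_rpow_left_iff (x := (2:ℝ))
      (y := (0:ℝ)) (z := β) one_lt_two |>.mpr hβ, Real.rpow_zero (2:ℝ)]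
  have hbound : ∀ x : Ed d, |Φ x| ≤ max C 0 * ‖x‖ ^ β := by
    intro x
    rcases eq_or_ne x 0 with rfl | hx
    · simp [hΦ0, Real.zero_rpow hβ.ne', abs_nonneg]
    · have hnx : (0:ℝ) < ‖x‖ := norm_pos_iff.mpr hx
      have hy : ‖x‖⁻¹ • x ∈ Metric.sphere (0 : Ed d) 1 := by
        simp [norm_smul, abs_of_pos (inv_pos.mpr hnx), inv_mul_cancel₀ hnx.ne']
      have hx' : Φ x = ‖x‖ ^ β * Φ (‖x‖⁻¹ • x) := by
        have := hΦ_hom ‖x‖ hnx (‖x‖⁻¹ • x)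
        rw [smul_smul, mul_inv_cancel₀ hnx.ne', one_smul] at this
        exact this
      rw [hx', abs_mul, _root_.abs_of_nonneg (Real.rpow_nonneg hnx.le β)]
      calc ‖x‖ ^ β * |Φ (‖x‖⁻¹ • x)| ≤ ‖x‖ ^ β * max C 0 := by
            exact mul_le_mul_of_nonneg_left
              (le_trans (hC _ hy) (le_max_left _ _)) (Real.rpow_nonneg hnx.le β)
      _ = max C 0 * ‖x‖ ^ β := mul_comm _ _
  have hnorm : Tendsto (fun x : Ed d => max C 0 * ‖x‖ ^ β) (𝓝 0) (𝓝 0) := by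
    have h1 : Tendsto (fun x : Ed d => ‖x‖) (𝓝 0) (𝓝[≥] 0) := by
      refine tendsto_nhdsWithin_iff.mpr ⟨?_, Eventually.of_forall fun x => norm_nonneg x⟩
      simpa using (continuous_norm (E := Ed d)).tendsto 0
    have h2 : Tendsto (fun t : ℝ => t ^ β) (𝓝[≥] (0:ℝ)) (𝓝 0) := by
      have h := (Real.continuousAt_rpow_const 0 β (Or.inr hβ.le)).tendsto
      rw [Real.zero_rpow hβ.ne'] at h
      exact h.mono_left nhdsWithin_le_nhds
    simpa using (h2.comp h1).const_mul (max C 0)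
  exact squeeze_zero_norm (f := Φ) (fun x => by simpa [Real.norm_eq_abs] using hbound x) hnorm

lemma V_tendsto_one {β : ℝ} (hβ : 0 < β) (V Φ : Ed d → ℝ)
    (hΦ_smooth : ContDiffOn ℝ (⊤ : ℕ∞) Φ {x : Ed d | x ≠ 0})
    (hΦ_hom : ∀ t : ℝ, 0 < t → ∀ x : Ed d, Φ (t • x) = t ^ β * Φ x)
    (hV_asymp : (fun x : Ed d => V x - (1 - Φ x)) =o[𝓝 0] fun x : Ed d => ‖x‖ ^ β) :
    Tendsto V (𝓝 (0 : Ed d)) (𝓝 1) := by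
  have hΦ := hom_tendsto_zero hβ Φ hΦ_smooth hΦ_hom
  have hnorm : Tendsto (fun x : Ed d => ‖x‖ ^ β) (𝓝 0) (𝓝 0) := by
    have h2 : Tendsto (fun t : ℝ => t ^ β) (𝓝[≥] (0:ℝ)) (𝓝 0) := by
      have h := (Real.continuousAt_rpow_const 0 β (Or.inr hβ.le)).tendsto
      rw [Real.zero_rpow hβ.ne'] at h
      exact h.mono_left nhdsWithin_le_nhds
    have h1 : Tendsto (fun x : Ed d => ‖x‖) (𝓝 0) (𝓝[≥] 0) := by
      refine tendsto_nhdsWithin_iff.mpr ⟨?_, Eventually.of_forall fun x => norm_nonneg x⟩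
      simpa using (continuous_norm (E := Ed d)).tendsto 0
    exact h2.comp h1
  have hE : Tendsto (fun x : Ed d => V x - (1 - Φ x)) (𝓝 0) (𝓝 0) :=
    hV_asymp.trans_tendsto hnorm
  have : Tendsto (fun x : Ed d => (V x - (1 - Φ x)) + (1 - Φ x)) (𝓝 0) (𝓝 (0 + (1 - 0))) :=
    hE.add ((tendsto_const_nhds).sub hΦ)
  simpa using this

lemma ae_smul_transfer {P : Ed d → Prop} (h : ∀ᵐ x : Ed d ∂volume, P x)
    {r : ℝ} (hr : r ≠ 0) : ∀ᵐ x : Ed d ∂volume, P (r • x) := by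
  have hq := MeasureTheory.Measure.quasiMeasurePreserving_smul
    (volume : Measure (Ed d)) hr
  exact hq.ae h

lemma tendsto_sq_norm_zero {f : ℝ → ℝ} {g : ℝ → ℝ} {l : Filter ℝ}
    (hev : ∀ᶠ α in l, g α = (f α) ^ 2) (hf0 : ∀ᶠ α in l, 0 ≤ f α)
    (hg : Tendsto g l (𝓝 0)) : Tendsto f l (𝓝 0) := by
  have h1 : Tendsto (fun α => Real.sqrt (g α)) l (𝓝 (Real.sqrt 0)) := hg.sqrt
  rw [Real.sqrt_zero] at h1
  refine h1.congr' ?_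
  filter_upwards [hev, hf0] with α h1 h2
  rw [h1, Real.sqrt_sq h2]

lemma scaled_diff_tendsto (W : Ed d → ℝ) (hWm : Measurable W) (Cw : ℝ)
    (hbd : ∀ x, |W x| ≤ Cw) (hWc : Tendsto W (𝓝 (0 : Ed d)) (𝓝 1))
    {κ : ℝ} (hκ : 0 < κ) (u : L2 d) (w : ℝ → L2 d)
    (hw : ∀ α : ℝ, 0 < α → (⇑(w α) : Ed d → ℂ) =ᵐ[volume]
      fun x => (((W ((α ^ κ : ℝ) • x) - 1 : ℝ)) : ℂ) * (⇑u) x) :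
    Tendsto (fun α => ‖w α‖) (𝓝[>] (0:ℝ)) (𝓝 0) := by
  set g : ℝ → ℝ := fun α => ∫ x : Ed d, (W ((α ^ κ : ℝ) • x) - 1) ^ 2 * ‖(⇑u) x‖ ^ 2
    with hg_def
  have hs : Tendsto (fun α : ℝ => α ^ κ) (𝓝[>] (0:ℝ)) (𝓝 0) := rpow_tendsto hκ
  have hgc : Tendsto g (𝓝[>] (0:ℝ)) (𝓝 0) := by
    have h0 : (0 : ℝ) = ∫ x : Ed d, (0:ℝ) := by simp
    rw [h0]
    refine tendsto_integral_filter_of_dominated_convergence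
      (fun x => (Cw + 1) ^ 2 * ‖(⇑u) x‖ ^ 2) ?_ ?_ ?_ ?_
    · refine Eventually.of_forall fun α => ?_
      refine (Measurable.aestronglyMeasurable ?_).mul
        ((MeasureTheory.Lp.aestronglyMeasurable u).norm.aemeasurable.pow_const 2
          |>.aestronglyMeasurable)
      exact ((hWm.comp (measurable_const_smul _)).sub measurable_const).pow_const 2
    · refine Eventually.of_forall fun α => Eventually.of_forall fun x => ?_
      have h1 : |W ((α ^ κ : ℝ) • x) - 1| ≤ Cw + 1 := by
        have := hbd ((α ^ κ : ℝ) • x)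
        have h2 : (0:ℝ) ≤ Cw := le_trans (abs_nonneg _) (hbd 0)
        rw [abs_sub_le_iff]
        constructor <;> nlinarith [abs_le.mp this]
      have h2 : (W ((α ^ κ : ℝ) • x) - 1) ^ 2 ≤ (Cw + 1) ^ 2 :=
        sq_le_sq' (by linarith [abs_le.mp h1]) (by linarith [abs_le.mp h1])
      have h3 : 0 ≤ ‖(⇑u) x‖ ^ 2 := by positivity
      rw [Real.norm_eq_abs, abs_mul, _root_.abs_of_nonneg (sq_nonneg _),
        _root_.abs_of_nonneg h3]
      exact mul_le_mul_of_nonneg_right h2 h3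
    · exact (integrable_normsq u).const_mul _
    · refine Eventually.of_forall fun x => ?_
      have h1 : Tendsto (fun α : ℝ => (α ^ κ : ℝ) • x) (𝓝[>] (0:ℝ)) (𝓝 (0 : Ed d)) := by
        have hcont : Continuous fun t : ℝ => t • x := continuous_id.smul continuous_const
        have hco := hcont.tendsto 0
        rw [zero_smul] at hco
        exact hco.comp hs
      have h2 : Tendsto (fun α : ℝ => W ((α ^ κ : ℝ) • x)) (𝓝[>] (0:ℝ)) (𝓝 1) :=
        hWc.comp h1
      have h3 : Tendsto (fun α : ℝ => (W ((α ^ κ : ℝ) • x) - 1) ^ 2 * ‖(⇑u) x‖ ^ 2)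
          (𝓝[>] (0:ℝ)) (𝓝 (((1:ℝ) - 1) ^ 2 * ‖(⇑u) x‖ ^ 2)) :=
        (((h2.sub tendsto_const_nhds).pow 2).mul_const _)
      simpa using h3
  refine tendsto_sq_norm_zero ?_ ?_ hgc
  · filter_upwards [self_mem_nhdsWithin] with α (hα : 0 < α)
    exact (normsq_rep u (w α) _ (hw α hα)).symm
  · exact Eventually.of_forall fun α => norm_nonneg _

open scoped ENNReal in
lemma exists_orthonormal_family (d n : ℕ) (hd : 1 ≤ d) :
    ∃ e : Fin n → L2 d, Orthonormal ℂ e := by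
  classical
  set e₀ : Ed d := EuclideanSpace.single (⟨0, hd⟩ : Fin d) (1:ℝ) with he₀
  have hne₀ : ‖e₀‖ = 1 := by simp [he₀, EuclideanSpace.norm_single]
  set ctr : Fin n → Ed d := fun i => ((3 * (i : ℕ) : ℝ)) • e₀ with hctr
  set s : Fin n → Set (Ed d) := fun i => Metric.ball (ctr i) 1 with hs
  have hms : ∀ i, MeasurableSet (s i) := fun i => measurableSet_ball
  have hfin : ∀ i, volume (s i) ≠ ⊤ := fun i => measure_ball_lt_top.ne
  have hpos : ∀ i, 0 < volume (s i) := fun i =>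
    Metric.measure_ball_pos volume _ one_pos
  set cc : Fin n → ℂ := fun i => (((volume (s i)).toReal ^ (-(1/2) : ℝ) : ℝ) : ℂ) with hcc
  refine ⟨fun i => indicatorConstLp 2 (hms i) (hfin i) (cc i), ?_⟩
  have hdisj : ∀ i j : Fin n, i ≠ j → s i ∩ s j = ∅ := by
    intro i j hij
    rw [Set.eq_empty_iff_forall_notMem]
    rintro x ⟨hxi, hxj⟩
    rw [hs] at hxi hxj
    simp only [Metric.mem_ball] at hxi hxj
    have hij' : (i : ℕ) ≠ (j : ℕ) := fun h => hij (Fin.ext h)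
    have hcast : (1:ℝ) ≤ |(i:ℕ) - ((j:ℕ):ℝ)| := by
      rcases lt_or_gt_of_ne hij' with h | h
      · rw [abs_sub_comm, _root_.abs_of_nonneg (by
          have : ((i:ℕ):ℝ) ≤ ((j:ℕ):ℝ) := Nat.cast_le.mpr h.le
          linarith)]
        have : ((i:ℕ):ℝ) + 1 ≤ ((j:ℕ):ℝ) := by exact_mod_cast Nat.succ_le_of_lt h
        linarith
      · rw [_root_.abs_of_nonneg (by
          have : ((j:ℕ):ℝ) ≤ ((i:ℕ):ℝ) := Nat.cast_le.mpr h.le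
          linarith)]
        have : ((j:ℕ):ℝ) + 1 ≤ ((i:ℕ):ℝ) := by exact_mod_cast Nat.succ_le_of_lt h
        linarith
    have hdist : (3:ℝ) ≤ dist (ctr i) (ctr j) := by
      rw [hctr, dist_eq_norm, ← sub_smul, norm_smul, hne₀, mul_one, Real.norm_eq_abs]
      have : (3 * (i:ℕ) : ℝ) - (3 * (j:ℕ) : ℝ) = 3 * (((i:ℕ):ℝ) - ((j:ℕ):ℝ)) := by ring
      rw [this, abs_mul, _root_.abs_of_pos (show (0:ℝ) < 3 by norm_num)]
      nlinarith
    have := dist_triangle (ctr i) x (ctr j)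
    rw [dist_comm (ctr i) x] at this
    linarith
  constructor
  · intro i
    rw [norm_indicatorConstLp (by norm_num) (by norm_num)]
    have ht : (0:ℝ) < (volume (s i)).toReal :=
      ENNReal.toReal_pos (hpos i).ne' (hfin i)
    have h2 : ‖cc i‖ = (volume (s i)).toReal ^ (-(1/2) : ℝ) := by
      rw [hcc]
      simp only [Complex.norm_real, Real.norm_eq_abs]
      exact _root_.abs_of_nonneg (Real.rpow_nonneg ht.le _)
    have h3 : (1 : ℝ) / (2 : ℝ≥0∞).toReal = (1/2 : ℝ) := by norm_num
    rw [h2, h3, measureReal_def, ← Real.rpow_add ht]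
    norm_num
  · intro i j hij
    rw [MeasureTheory.L2.inner_def]
    have hz : (fun x : Ed d =>
        @inner ℂ _ _ ((indicatorConstLp 2 (hms i) (hfin i) (cc i) : L2 d) x)
          ((indicatorConstLp 2 (hms j) (hfin j) (cc j) : L2 d) x)) =ᵐ[volume]
        (fun _ => (0 : ℂ)) := by
      filter_upwards [MeasureTheory.indicatorConstLp_coeFn
          (p := (2:ℝ≥0∞)) (hs := hms i) (hμs := hfin i) (c := cc i),
        MeasureTheory.indicatorConstLp_coeFn
          (p := (2:ℝ≥0∞)) (hs := hms j) (hμs := hfin j) (c := cc j)] with x h1 h2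
      rw [h1, h2]
      by_cases hx : x ∈ s i
      · have hx2 : x ∉ s j := by
          intro hx2
          have := hdisj i j hij
          rw [Set.eq_empty_iff_forall_notMem] at this
          exact this x ⟨hx, hx2⟩
        simp [Set.indicator_of_notMem hx2]
      · simp [Set.indicator_of_notMem hx]
    rw [integral_congr_ae hz]
    simp

lemma unit_span_bound {n : ℕ} (e : Fin n → L2 d) (he : Orthonormal ℂ e)
    (T : L2 d →ₗ[ℂ] L2 d) (u : L2 d) (hu : u ∈ Submodule.span ℂ (Set.range e))
    (hnu : ‖u‖ = 1) : ‖u - T u‖ ≤ ∑ i : Fin n, ‖e i - T (e i)‖ := by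
  obtain ⟨cf, rfl⟩ := (Submodule.mem_span_range_iff_exists_fun ℂ).mp hu
  have hci : ∀ i, ‖cf i‖ ≤ 1 := by
    intro i
    have h1 : @inner ℂ _ _ (e i) (∑ j : Fin n, cf j • e j) = cf i :=
      he.inner_right_fintype cf i
    calc ‖cf i‖ = ‖@inner ℂ _ _ (e i) (∑ j : Fin n, cf j • e j)‖ := by rw [h1]
    _ ≤ ‖e i‖ * ‖∑ j : Fin n, cf j • e j‖ := norm_inner_le_norm _ _
    _ = 1 := by rw [hnu, he.1 i]; norm_num
  have hdecomp : (∑ j : Fin n, cf j • e j) - T (∑ j : Fin n, cf j • e j)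
      = ∑ j : Fin n, cf j • (e j - T (e j)) := by
    rw [map_sum]
    rw [← Finset.sum_sub_distrib]
    refine Finset.sum_congr rfl fun j _ => ?_
    rw [_root_.map_smul, smul_sub]
  rw [hdecomp]
  calc ‖∑ j : Fin n, cf j • (e j - T (e j))‖ ≤ ∑ j : Fin n, ‖cf j • (e j - T (e j))‖ :=
        norm_sum_le _ _
  _ ≤ ∑ j : Fin n, ‖e j - T (e j)‖ := by
      refine Finset.sum_le_sum fun j _ => ?_
      rw [norm_smul]
      nlinarith [hci j, norm_nonneg (e j - T (e j)), norm_nonneg (cf j)]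


lemma sesq_re_abs_le (w u : L2 d) : |(sesq w u).re| ≤ ‖w‖ * ‖u‖ := by
  rw [sesq_eq_inner]
  calc |(@inner ℂ _ _ u w).re| ≤ ‖(@inner ℂ _ _ u w)‖ := Complex.abs_re_le_norm _
  _ ≤ ‖u‖ * ‖w‖ := norm_inner_le_norm _ _
  _ = ‖w‖ * ‖u‖ := mul_comm _ _

lemma unit_exists {n : ℕ} (hn : 1 ≤ n) (M : Submodule ℂ (L2 d))
    (hfr : Module.finrank ℂ M = n) :
    Nonempty {u : L2 d // u ∈ M ∧ ‖u‖ = 1} := by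
  have hM : M ≠ ⊥ := by
    intro h
    rw [h, finrank_bot] at hfr
    omega
  obtain ⟨v, hvM, hv0⟩ := Submodule.ne_bot_iff M |>.mp hM
  have hnv : (0:ℝ) < ‖v‖ := norm_pos_iff.mpr hv0
  refine ⟨⟨(‖v‖⁻¹ : ℝ) • v, M.smul_mem _ hvM, ?_⟩⟩
  rw [norm_smul]
  simp [_root_.abs_of_pos (inv_pos.mpr hnv), inv_mul_cancel₀ hnv.ne']

lemma lamEig_ge {n : ℕ} (hn : 1 ≤ n) (B : L2 d → L2 d) (K : ℝ)
    (hK : ∀ u : L2 d, ‖u‖ = 1 → ‖B u‖ ≤ K)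
    (M₀ : Submodule ℂ (L2 d)) (hfr : Module.finrank ℂ M₀ = n) (r : ℝ)
    (hr : ∀ u : L2 d, u ∈ M₀ → ‖u‖ = 1 → r ≤ (sesq (B u) u).re) :
    r ≤ lamEig B n := by
  have hterm : ∀ (M : Submodule ℂ (L2 d)), Module.finrank ℂ M = n →
      ∀ u : {u : L2 d // u ∈ M ∧ ‖u‖ = 1}, |(sesq (B u.1) u.1).re| ≤ K := by
    intro M hM u
    calc |(sesq (B u.1) u.1).re| ≤ ‖B u.1‖ * ‖u.1‖ := sesq_re_abs_le _ _
    _ ≤ K := by rw [u.2.2, mul_one]; exact hK u.1 u.2.2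
  have hBdd : BddAbove (Set.range fun M : {M : Submodule ℂ (L2 d) //
      Module.finrank ℂ M = n} =>
      ⨅ u : {u : L2 d // u ∈ M.1 ∧ ‖u‖ = 1}, (sesq (B u.1) u.1).re) := by
    refine ⟨K, ?_⟩
    rintro x ⟨M, rfl⟩
    have hne := unit_exists hn M.1 M.2
    obtain ⟨u₀⟩ := hne
    have hbb : BddBelow (Set.range fun u : {u : L2 d // u ∈ M.1 ∧ ‖u‖ = 1} =>
        (sesq (B u.1) u.1).re) := by
      refine ⟨-K, ?_⟩
      rintro y ⟨u, rfl⟩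
      linarith [abs_le.mp (hterm M.1 M.2 u)]
    calc (⨅ u : {u : L2 d // u ∈ M.1 ∧ ‖u‖ = 1}, (sesq (B u.1) u.1).re)
        ≤ (sesq (B u₀.1) u₀.1).re := ciInf_le hbb u₀
    _ ≤ K := by linarith [abs_le.mp (hterm M.1 M.2 u₀)]
  have hne := unit_exists hn M₀ hfr
  calc r ≤ ⨅ u : {u : L2 d // u ∈ M₀ ∧ ‖u‖ = 1}, (sesq (B u.1) u.1).re :=
        le_ciInf fun u => hr u.1 u.2.1 u.2.2
  _ ≤ lamEig B n := le_ciSup hBdd ⟨M₀, hfr⟩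


end AuxStmt12

set_option maxHeartbeats 2000000

/-- For a family `ψ_α` of normalized eigenfunctions of `B_α` with
eigenvalue `λ_α⁽ⁿ⁾`, setting `θ_α := W_α ψ_α`, one has `‖θ_α - ψ_α‖ → 0` as `α → 0⁺`. -/
theorem stmt_12 (d : ℕ) (hd : 1 ≤ d)
    (a V : Ed d → ℝ) (ha_meas : Measurable a) (hV_meas : Measurable V)
    (Ca : ℝ) (ha_bdd : ∀ ξ, |a ξ| ≤ Ca) (Cv : ℝ) (hV_bdd : ∀ x, |V x| ≤ Cv)
    (ha_decay : Tendsto a (cocompact (Ed d)) (𝓝 0))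
    (hV_decay : Tendsto V (cocompact (Ed d)) (𝓝 0))
    (ha0 : a 0 = 1) (hV0 : V 0 = 1)
    (ha_le : ∀ ξ, a ξ ≤ 1) (ha_lt : ∀ ξ : Ed d, ξ ≠ 0 → a ξ < 1)
    (hV_lt : ∀ x : Ed d, x ≠ 0 → V x < 1)
    (c : ℝ) (hc : 0 < c)
    (hV_rng : ∀ᵐ x : Ed d ∂(volume : Measure (Ed d)), -1 + c ≤ V x ∧ V x ≤ 1)
    (β γ : ℝ) (hβ : 0 < β) (hγ : 0 < γ)
    (Φ Ψ : Ed d → ℝ)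
    (hΦ_smooth : ContDiffOn ℝ (⊤ : ℕ∞) Φ {x : Ed d | x ≠ 0})
    (hΨ_smooth : ContDiffOn ℝ (⊤ : ℕ∞) Ψ {ξ : Ed d | ξ ≠ 0})
    (hΦ_pos : ∀ x : Ed d, x ≠ 0 → 0 < Φ x) (hΨ_pos : ∀ ξ : Ed d, ξ ≠ 0 → 0 < Ψ ξ)
    (hΦ_hom : ∀ t : ℝ, 0 < t → ∀ x : Ed d, Φ (t • x) = t ^ β * Φ x)
    (hΨ_hom : ∀ t : ℝ, 0 < t → ∀ ξ : Ed d, Ψ (t • ξ) = t ^ γ * Ψ ξ)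
    (hV_asymp : (fun x : Ed d => V x - (1 - Φ x)) =o[𝓝 0] fun x : Ed d => ‖x‖ ^ β)
    (ha_asymp : (fun ξ : Ed d => a ξ - (1 - Ψ ξ)) =o[𝓝 0] fun ξ : Ed d => ‖ξ‖ ^ γ)
    (σ : ℝ) (hσ : σ = β * γ / (β + γ))
    (F : L2 d ≃ₗᵢ[ℂ] L2 d) (hF : IsPaperFourier F)
    (MW : ℝ → L2 d →L[ℂ] L2 d)
    (hMW : ∀ α : ℝ, 0 < α → ∀ u : L2 d,
      (⇑(MW α u) : Ed d → ℂ) =ᵐ[volume]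
        fun x => (V ((α ^ (γ / (γ + β)) : ℝ) • x) : ℂ) * (⇑u) x)
    (Mb : ℝ → L2 d →L[ℂ] L2 d)
    (hMb : ∀ α : ℝ, 0 < α → ∀ u : L2 d,
      (⇑(Mb α u) : Ed d → ℂ) =ᵐ[volume]
        fun ξ => (a ((α ^ (β / (γ + β)) : ℝ) • ξ) : ℂ) * (⇑u) ξ)
    (B : ℝ → L2 d → L2 d)
    (hB : ∀ (α : ℝ) (u : L2 d), B α u = MW α (F.symm (Mb α (F (MW α u)))))
    (n : ℕ) (hn : 1 ≤ n)
    (ψ : ℝ → L2 d)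
    (hψ : ∀ α : ℝ, 0 < α →
      ‖ψ α‖ = 1 ∧ B α (ψ α) = ((lamEig (B α) n : ℝ) : ℂ) • ψ α)
    :
    Tendsto (fun α : ℝ => ‖MW α (ψ α) - ψ α‖) (𝓝[>] (0 : ℝ)) (𝓝 0) := by
  
  have hκ₁ : 0 < γ / (γ + β) := div_pos hγ (by linarith)
  have hκ₂ : 0 < β / (γ + β) := div_pos hβ (by linarith)
  set κ₁ : ℝ := γ / (γ + β) with hκ₁def
  set κ₂ : ℝ := β / (γ + β) with hκ₂def
  have hCv1 : (1:ℝ) ≤ Cv := by have := hV_bdd 0; rw [hV0] at this; simpa using this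
  have hCa1 : (1:ℝ) ≤ Ca := by have := ha_bdd 0; rw [ha0] at this; simpa using this
  have hVc : Tendsto V (𝓝 (0 : Ed d)) (𝓝 1) :=
    V_tendsto_one hβ V Φ hΦ_smooth hΦ_hom hV_asymp
  have hac : Tendsto a (𝓝 (0 : Ed d)) (𝓝 1) :=
    V_tendsto_one hγ a Ψ hΨ_smooth hΨ_hom ha_asymp
  -- strong convergence of the multipliers
  have hMWtend : ∀ u : L2 d,
      Tendsto (fun α => ‖MW α u - u‖) (𝓝[>] (0:ℝ)) (𝓝 0) := by
    intro u
    refine scaled_diff_tendsto V hV_meas Cv hV_bdd hVc hκ₁ u (fun α => MW α u - u)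
      fun α hα => ?_
    filter_upwards [MeasureTheory.Lp.coeFn_sub (MW α u) u, hMW α hα u] with x h1 h2
    rw [h1]
    simp only [Pi.sub_apply, h2]
    push_cast
    ring
  have hMbtend : ∀ u : L2 d,
      Tendsto (fun α => ‖Mb α u - u‖) (𝓝[>] (0:ℝ)) (𝓝 0) := by
    intro u
    refine scaled_diff_tendsto a ha_meas Ca ha_bdd hac hκ₂ u (fun α => Mb α u - u)
      fun α hα => ?_
    filter_upwards [MeasureTheory.Lp.coeFn_sub (Mb α u) u, hMb α hα u] with x h1 h2
    rw [h1]
    simp only [Pi.sub_apply, h2]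
    push_cast
    ring
  -- norm bounds
  have hMWle : ∀ α : ℝ, 0 < α → ∀ u : L2 d, ‖MW α u‖ ≤ Cv * ‖u‖ := fun α hα u =>
    norm_le_rep u (MW α u) (fun x => V ((α ^ κ₁ : ℝ) • x)) Cv
      (fun x => hV_bdd _) (hMW α hα u)
  have hMble : ∀ α : ℝ, 0 < α → ∀ u : L2 d, ‖Mb α u‖ ≤ Ca * ‖u‖ := fun α hα u =>
    norm_le_rep u (Mb α u) (fun x => a ((α ^ κ₂ : ℝ) • x)) Ca
      (fun x => ha_bdd _) (hMb α hα u)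
  -- strong convergence of B
  have hBtend : ∀ v : L2 d,
      Tendsto (fun α => ‖B α v - v‖) (𝓝[>] (0:ℝ)) (𝓝 0) := by
    intro v
    have hG : Tendsto (fun α => Cv * ((Ca + 1) * ‖MW α v - v‖ + ‖Mb α (F v) - F v‖)
        + (Cv + 1) * ‖MW α v - v‖) (𝓝[>] (0:ℝ)) (𝓝 0) := by
      have := ((((hMWtend v).const_mul (Ca+1)).add (hMbtend (F v))).const_mul Cv).add
        ((hMWtend v).const_mul (Cv+1))
      simpa using this
    refine squeeze_zero' (Eventually.of_forall fun α => norm_nonneg _) ?_ hG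
    filter_upwards [self_mem_nhdsWithin] with α (hα : 0 < α)
    rw [hB]
    have h1 : ‖MW α (F.symm (Mb α (F (MW α v)))) - v‖
        ≤ ‖MW α (F.symm (Mb α (F (MW α v)))) - MW α (MW α v)‖ + ‖MW α (MW α v) - v‖ := by
      have := norm_sub_le_norm_sub_add_norm_sub
        (MW α (F.symm (Mb α (F (MW α v))))) (MW α (MW α v)) v
      linarith
    have h2 : ‖MW α (F.symm (Mb α (F (MW α v)))) - MW α (MW α v)‖
        ≤ Cv * ‖Mb α (F (MW α v)) - F (MW α v)‖ := by
      rw [← map_sub]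
      calc ‖MW α (F.symm (Mb α (F (MW α v))) - MW α v)‖
          ≤ Cv * ‖F.symm (Mb α (F (MW α v))) - MW α v‖ := hMWle α hα _
      _ = Cv * ‖Mb α (F (MW α v)) - F (MW α v)‖ := by
          congr 1
          have : MW α v = F.symm (F (MW α v)) := (F.symm_apply_apply _).symm
          rw [this, ← map_sub, F.symm.norm_map, F.symm_apply_apply]
    have h3 : ‖Mb α (F (MW α v)) - F (MW α v)‖
        ≤ (Ca + 1) * ‖MW α v - v‖ + ‖Mb α (F v) - F v‖ := by
      have e1 : Mb α (F (MW α v)) - F (MW α v)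
          = Mb α (F (MW α v) - F v) - (F (MW α v) - F v) + (Mb α (F v) - F v) := by
        rw [map_sub]; abel
      rw [e1]
      calc ‖Mb α (F (MW α v) - F v) - (F (MW α v) - F v) + (Mb α (F v) - F v)‖
          ≤ ‖Mb α (F (MW α v) - F v) - (F (MW α v) - F v)‖ + ‖Mb α (F v) - F v‖ :=
            norm_add_le _ _
      _ ≤ (‖Mb α (F (MW α v) - F v)‖ + ‖F (MW α v) - F v‖) + ‖Mb α (F v) - F v‖ := by
            linarith [norm_sub_le (Mb α (F (MW α v) - F v)) (F (MW α v) - F v)]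
      _ ≤ (Ca * ‖F (MW α v) - F v‖ + ‖F (MW α v) - F v‖) + ‖Mb α (F v) - F v‖ := by
            linarith [hMble α hα (F (MW α v) - F v)]
      _ = (Ca + 1) * ‖MW α v - v‖ + ‖Mb α (F v) - F v‖ := by
            rw [← map_sub, F.norm_map]; ring
    have h4 : ‖MW α (MW α v) - v‖ ≤ (Cv + 1) * ‖MW α v - v‖ := by
      have e1 : MW α (MW α v) - v = MW α (MW α v - v) + (MW α v - v) := by
        rw [map_sub]; abel
      rw [e1]
      calc ‖MW α (MW α v - v) + (MW α v - v)‖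
          ≤ ‖MW α (MW α v - v)‖ + ‖MW α v - v‖ := norm_add_le _ _
      _ ≤ Cv * ‖MW α v - v‖ + ‖MW α v - v‖ := by linarith [hMWle α hα (MW α v - v)]
      _ = (Cv + 1) * ‖MW α v - v‖ := by ring
    have hCv0 : (0:ℝ) ≤ Cv := by linarith
    nlinarith [mul_le_mul_of_nonneg_left h3 hCv0]

  -- trial subspace
  obtain ⟨e, he⟩ := exists_orthonormal_family d n hd
  set M₀ : Submodule ℂ (L2 d) := Submodule.span ℂ (Set.range e) with hM₀
  have hfr : Module.finrank ℂ M₀ = n := by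
    rw [hM₀, finrank_span_eq_card he.linearIndependent]
    simp
  set S : ℝ → ℝ := fun α => ∑ i : Fin n, ‖e i - B α (e i)‖ with hSdef
  have hS : Tendsto S (𝓝[>] (0:ℝ)) (𝓝 0) := by
    have h := tendsto_finset_sum (Finset.univ : Finset (Fin n))
      (fun i (_ : i ∈ Finset.univ) =>
        ((hBtend (e i)).congr (fun α => (norm_sub_rev _ _))))
    simpa using h
  have hBlin : ∀ α : ℝ, ∃ T : L2 d →ₗ[ℂ] L2 d, ∀ u, T u = B α u := by
    intro α
    refine ⟨((MW α : L2 d →ₗ[ℂ] L2 d).comp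
      ((F.symm.toLinearEquiv.toLinearMap).comp
        (((Mb α : L2 d →ₗ[ℂ] L2 d)).comp
          ((F.toLinearEquiv.toLinearMap).comp (MW α : L2 d →ₗ[ℂ] L2 d))))),
      fun u => ?_⟩
    rw [hB]
    rfl
  have hCv0 : (0:ℝ) ≤ Cv := by linarith
  have hCa0 : (0:ℝ) ≤ Ca := by linarith
  have hK : ∀ α : ℝ, 0 < α → ∀ u : L2 d, ‖u‖ = 1 → ‖B α u‖ ≤ Cv * (Ca * Cv) := by
    intro α hα u hu
    rw [hB]
    calc ‖MW α (F.symm (Mb α (F (MW α u))))‖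
        ≤ Cv * ‖F.symm (Mb α (F (MW α u)))‖ := hMWle α hα _
    _ = Cv * ‖Mb α (F (MW α u))‖ := by rw [F.symm.norm_map]
    _ ≤ Cv * (Ca * ‖F (MW α u)‖) :=
        mul_le_mul_of_nonneg_left (hMble α hα (F (MW α u))) hCv0
    _ = Cv * (Ca * ‖MW α u‖) := by rw [F.norm_map]
    _ ≤ Cv * (Ca * Cv) := by
        have h1 : ‖MW α u‖ ≤ Cv := by
          have := hMWle α hα u; rw [hu, mul_one] at this; exact this
        nlinarith [mul_nonneg hCv0 hCa0, h1]
  have hlam : ∀ α : ℝ, 0 < α → 1 - S α ≤ lamEig (B α) n := by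
    intro α hα
    obtain ⟨T, hT⟩ := hBlin α
    refine lamEig_ge hn (B α) (Cv * (Ca * Cv)) (hK α hα) M₀ hfr _ ?_
    intro u huM hnu
    rw [sesq_eq_inner]
    have hb : ‖u - B α u‖ ≤ S α := by
      rw [← hT u]
      calc ‖u - T u‖ ≤ ∑ i : Fin n, ‖e i - T (e i)‖ :=
            unit_span_bound e he T u (by rwa [hM₀] at huM) hnu
      _ = S α := Finset.sum_congr rfl fun i _ => by rw [hT]
    have h1 : (@inner ℂ _ _ u (B α u))
        = (@inner ℂ _ _ u u) - (@inner ℂ _ _ u (u - B α u)) := by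
      rw [inner_sub_right]; ring
    have h2 : (@inner ℂ _ _ u u) = ((1:ℝ) : ℂ) := by
      rw [inner_self_eq_norm_sq_to_K, hnu]; norm_num
    have h3 : |(@inner ℂ _ _ u (u - B α u)).re| ≤ ‖u - B α u‖ := by
      calc |(@inner ℂ _ _ u (u - B α u)).re| ≤ ‖(@inner ℂ _ _ u (u - B α u))‖ :=
            Complex.abs_re_le_norm _
      _ ≤ ‖u‖ * ‖u - B α u‖ := norm_inner_le_norm _ _
      _ = ‖u - B α u‖ := by rw [hnu, one_mul]
    rw [h1, Complex.sub_re, h2]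
    have := abs_le.mp h3
    simp only [Complex.ofReal_re]
    linarith
  -- quantitative eigenfunction bound
  have hc'pos : 0 < min c 1 := lt_min hc one_pos
  set c' : ℝ := min c 1 with hc'def
  have hc'le1 : c' ≤ 1 := min_le_right _ _
  have hc'lec : c' ≤ c := min_le_left _ _
  have main : ∀ α : ℝ, 0 < α →
      ‖MW α (ψ α) - ψ α‖^2 ≤ ((2 - c') / c') * S α := by
    intro α hα
    obtain ⟨hψ1, hψ2⟩ := hψ α hα
    set lam : ℝ := lamEig (B α) n with hlamdef
    set θ : L2 d := MW α (ψ α) with hθdef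
    have hι : (@inner ℂ _ _ (B α (ψ α)) (ψ α)) = ((lam : ℝ) : ℂ) := by
      rw [hψ2, inner_smul_left, inner_self_eq_norm_sq_to_K, hψ1]
      simp [Complex.conj_ofReal]
    have hsa : (@inner ℂ _ _ (B α (ψ α)) (ψ α))
        = @inner ℂ _ _ (F.symm (Mb α (F θ))) θ := by
      rw [hB]
      exact mul_selfadj (F.symm (Mb α (F θ))) (ψ α)
        (MW α (F.symm (Mb α (F θ)))) θ _ (hMW α hα _) (hMW α hα _)
    have hF2 : @inner ℂ _ _ (F.symm (Mb α (F θ))) θ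
        = @inner ℂ _ _ (Mb α (F θ)) (F θ) := by
      have h := F.inner_map_map (F.symm (Mb α (F θ))) θ
      rw [F.apply_symm_apply] at h
      exact h.symm
    have hlamint : (lam : ℝ) = ∫ ξ : Ed d, a ((α ^ κ₂ : ℝ) • ξ) * ‖(⇑(F θ)) ξ‖^2 := by
      have h5 : (@inner ℂ _ _ (Mb α (F θ)) (F θ)).re
          = (@inner ℂ _ _ (F θ) (Mb α (F θ))).re := by
        rw [← inner_conj_symm (Mb α (F θ)) (F θ), Complex.conj_re]
      have h6 := inner_rep (F θ) (Mb α (F θ))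
        (fun ξ => a ((α ^ κ₂ : ℝ) • ξ)) (hMb α hα (F θ))
      have h7 : (lam : ℝ) = (@inner ℂ _ _ (Mb α (F θ)) (F θ)).re := by
        rw [← hF2, ← hsa, hι]; simp
      rw [h7, h5, h6]
    have ihθ := integrable_normsq (F θ)
    have iah : Integrable (fun ξ : Ed d => a ((α ^ κ₂ : ℝ) • ξ) * ‖(⇑(F θ)) ξ‖^2)
        volume := by
      refine ihθ.bdd_mul (c := Ca) ?_ (Eventually.of_forall fun ξ => by rw [Real.norm_eq_abs]; exact ha_bdd _)
      exact ((ha_meas.comp (measurable_const_smul _))).aestronglyMeasurable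
    have hle1 : (lam : ℝ) ≤ ‖θ‖^2 := by
      rw [hlamint]
      calc (∫ ξ : Ed d, a ((α ^ κ₂ : ℝ) • ξ) * ‖(⇑(F θ)) ξ‖^2)
          ≤ ∫ ξ : Ed d, ‖(⇑(F θ)) ξ‖^2 := by
            refine integral_mono iah ihθ fun ξ => ?_
            exact mul_le_of_le_one_left (by positivity) (ha_le _)
      _ = ‖F θ‖^2 := (normsq_integral _).symm
      _ = ‖θ‖^2 := by rw [F.norm_map]
    have hrng : ∀ᵐ x : Ed d ∂(volume : Measure (Ed d)),
        -1 + c ≤ V ((α ^ κ₁ : ℝ) • x) ∧ V ((α ^ κ₁ : ℝ) • x) ≤ 1 :=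
      ae_smul_transfer hV_rng (ne_of_gt (Real.rpow_pos_of_pos hα κ₁))
    set tV : ℝ := ∫ x : Ed d, V ((α ^ κ₁ : ℝ) • x) * ‖(⇑(ψ α)) x‖^2 with htVdef
    have ihψ := integrable_normsq (ψ α)
    have iV : Integrable (fun x : Ed d => V ((α ^ κ₁ : ℝ) • x) * ‖(⇑(ψ α)) x‖^2)
        volume := by
      refine ihψ.bdd_mul (c := Cv) ?_ (Eventually.of_forall fun x => by rw [Real.norm_eq_abs]; exact hV_bdd _)
      exact ((hV_meas.comp (measurable_const_smul _))).aestronglyMeasurable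
    have hθsq : ‖θ‖^2 = ∫ x : Ed d, (V ((α ^ κ₁ : ℝ) • x))^2 * ‖(⇑(ψ α)) x‖^2 :=
      normsq_rep (ψ α) θ _ (hMW α hα (ψ α))
    have iV2 := integrable_rep (ψ α) θ _ (hMW α hα (ψ α))
    have hiψ1 : ∫ x : Ed d, ‖(⇑(ψ α)) x‖^2 = 1 := by
      rw [← normsq_integral, hψ1]; norm_num
    have hle2 : ‖θ‖^2 ≤ (1 - c') + c' * tV := by
      rw [hθsq]
      have hint : Integrable (fun x : Ed d => (1 - c') * ‖(⇑(ψ α)) x‖^2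
          + c' * (V ((α ^ κ₁ : ℝ) • x) * ‖(⇑(ψ α)) x‖^2)) volume :=
        (ihψ.const_mul _).add (iV.const_mul _)
      have hmono : (∫ x : Ed d, (V ((α ^ κ₁ : ℝ) • x))^2 * ‖(⇑(ψ α)) x‖^2)
          ≤ ∫ x : Ed d, ((1 - c') * ‖(⇑(ψ α)) x‖^2
            + c' * (V ((α ^ κ₁ : ℝ) • x) * ‖(⇑(ψ α)) x‖^2)) := by
        refine integral_mono_ae iV2 hint ?_
        filter_upwards [hrng] with x hx
        have h8 : (0:ℝ) ≤ ‖(⇑(ψ α)) x‖^2 := by positivity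
        have h9 : (0:ℝ) ≤ (1 - V ((α ^ κ₁ : ℝ) • x)) * (V ((α ^ κ₁ : ℝ) • x) + 1 - c') := by
          apply mul_nonneg <;> [linarith [hx.2]; linarith [hx.1]]
        nlinarith [h9, h8]
      rw [integral_add (ihψ.const_mul _) (iV.const_mul _),
        MeasureTheory.integral_const_mul, MeasureTheory.integral_const_mul, hiψ1] at hmono
      linarith
    have hdiffrep : (⇑(θ - ψ α) : Ed d → ℂ) =ᵐ[volume]
        fun x => ((V ((α ^ κ₁ : ℝ) • x) - 1 : ℝ) : ℂ) * (⇑(ψ α)) x := by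
      filter_upwards [MeasureTheory.Lp.coeFn_sub θ (ψ α), hMW α hα (ψ α)] with x h1 h2
      rw [h1]
      simp only [Pi.sub_apply, hθdef, h2]
      push_cast
      ring
    have hdiff : ‖θ - ψ α‖^2
        = ∫ x : Ed d, (V ((α ^ κ₁ : ℝ) • x) - 1)^2 * ‖(⇑(ψ α)) x‖^2 :=
      normsq_rep (ψ α) (θ - ψ α) _ hdiffrep
    have idiff := integrable_rep (ψ α) (θ - ψ α) _ hdiffrep
    have hle3 : ‖θ - ψ α‖^2 ≤ (2 - c') * (1 - tV) := by
      rw [hdiff]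
      have hint2 : Integrable (fun x : Ed d => (2 - c') * ‖(⇑(ψ α)) x‖^2
          - (2 - c') * (V ((α ^ κ₁ : ℝ) • x) * ‖(⇑(ψ α)) x‖^2)) volume :=
        (ihψ.const_mul _).sub (iV.const_mul _)
      have hmono : (∫ x : Ed d, (V ((α ^ κ₁ : ℝ) • x) - 1)^2 * ‖(⇑(ψ α)) x‖^2)
          ≤ ∫ x : Ed d, ((2 - c') * ‖(⇑(ψ α)) x‖^2
            - (2 - c') * (V ((α ^ κ₁ : ℝ) • x) * ‖(⇑(ψ α)) x‖^2)) := by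
        refine integral_mono_ae idiff hint2 ?_
        filter_upwards [hrng] with x hx
        have h8 : (0:ℝ) ≤ ‖(⇑(ψ α)) x‖^2 := by positivity
        have h9 : (0:ℝ) ≤ (1 - V ((α ^ κ₁ : ℝ) • x)) * (V ((α ^ κ₁ : ℝ) • x) + 1 - c') := by
          apply mul_nonneg <;> [linarith [hx.2]; linarith [hx.1]]
        nlinarith [h9, h8]
      rw [integral_sub (ihψ.const_mul _) (iV.const_mul _),
        MeasureTheory.integral_const_mul, MeasureTheory.integral_const_mul, hiψ1] at hmono
      linarith
    have hlow := hlam α hα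
    have h10 : c' * (1 - tV) ≤ S α := by
      have h := le_trans hle1 hle2
      have hlow' : 1 - S α ≤ lam := by rw [hlamdef]; exact hlow
      linarith
    have h11 : (0:ℝ) ≤ ‖θ - ψ α‖^2 := by positivity
    have h12 : 2 - c' > 0 := by linarith
    rw [div_mul_eq_mul_div, le_div_iff₀ hc'pos]
    nlinarith [h10, hle3, h11, h12, hc'pos]
  have hfin : Tendsto (fun α : ℝ => ‖MW α (ψ α) - ψ α‖^2) (𝓝[>] (0:ℝ)) (𝓝 0) := by
    refine squeeze_zero' (g := fun α => ((2 - c') / c') * S α)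
      (Eventually.of_forall fun α => by positivity) ?_ ?_
    · filter_upwards [self_mem_nhdsWithin] with α (hα : 0 < α) using main α hα
    · have := hS.const_mul ((2 - c') / c')
      simpa using this
  exact tendsto_sq_norm_zero (Eventually.of_forall fun α => rfl)
    (Eventually.of_forall fun α => norm_nonneg _) hfin
end
end
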